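/- arXiv:2107.10000 — 9 statements merged into one kernel-verified Lean document; each statement's English description precedes it below -/
import Mathlib

section
/- Let T be finite, say T = {1,…,m}. Then the global Hoffman constant Hof F := sup_{b ∈ dom F, x ∈ ℝⁿ} d(x,F(b))/d(b,F⁻¹(x)) satisfies Hof F = max { d_*(0ₙ, conv{a_t : t ∈ J})⁻¹ : J ⊆ T, {a_t : t ∈ J} is linearly independent, and span{a_t : t ∈ J} = span{a_t : t ∈ T} }, where conv denotes the convex hull. -/
open Filter Set EMetric
open scoped Topology ENNReal NNReal

/-- The feasible set `F(b) = {x ∈ ℝⁿ : aₜ'x ≤ bₜ, t = 1,…,m}` of a finite linear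
inequality system. -/
def feas {n m : ℕ} (a : Fin m → (Fin n → ℝ)) (b : Fin m → ℝ) : Set (Fin n → ℝ) :=
  {x | ∀ t : Fin m, (∑ i, a t i * x i) ≤ b t}

/-- Distance (in `[0,+∞]`, with `d(z,∅) = +∞`) from `z` to `S ⊆ ℝⁿ` with respect to the
norm `p` on `ℝⁿ`. -/
noncomputable def pDist {n : ℕ} (p : Seminorm ℝ (Fin n → ℝ))
    (z : Fin n → ℝ) (S : Set (Fin n → ℝ)) : ℝ≥0∞ :=
  ⨅ s ∈ S, ENNReal.ofReal (p (z - s))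

/-- The dual norm `‖u‖_* = sup_{p(x) ≤ 1} |u'x|` of `u ∈ ℝⁿ`, valued in `[0,+∞]`. -/
noncomputable def dualNorm {n : ℕ} (p : Seminorm ℝ (Fin n → ℝ)) (u : Fin n → ℝ) : ℝ≥0∞ :=
  ⨆ (x : Fin n → ℝ) (_ : p x ≤ 1), ENNReal.ofReal |∑ i, u i * x i|

/-- The dual distance `d_*(0ₙ, S) = inf_{u ∈ S} ‖u‖_*`, valued in `[0,+∞]` (`= +∞` if `S = ∅`). -/
noncomputable def dualDist0 {n : ℕ} (p : Seminorm ℝ (Fin n → ℝ)) (S : Set (Fin n → ℝ)) : ℝ≥0∞ :=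
  ⨅ u ∈ S, dualNorm p u

section SemiBasics
variable {n : ℕ} (p : Seminorm ℝ (Fin n → ℝ))

lemma p_sum_le {ι : Type*} (s : Finset ι) (f : ι → (Fin n → ℝ)) :
    p (∑ i ∈ s, f i) ≤ ∑ i ∈ s, p (f i) :=
  Finset.le_sum_of_subadditive p (map_zero p).le (map_add_le_add p) s f

lemma p_upper : ∃ C : ℝ, 0 ≤ C ∧ ∀ x : Fin n → ℝ, p x ≤ C * ‖x‖ := by
  refine ⟨∑ i, p (Pi.single i 1), Finset.sum_nonneg fun i _ => apply_nonneg p _, fun x => ?_⟩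
  have hx : x = ∑ i, x i • (Pi.single i 1 : Fin n → ℝ) := by
    ext j
    simp [Pi.single_apply, Finset.sum_ite_eq' Finset.univ j]
  calc p x = p (∑ i, x i • (Pi.single i 1 : Fin n → ℝ)) := by rw [← hx]
    _ ≤ ∑ i, p (x i • (Pi.single i 1 : Fin n → ℝ)) := p_sum_le p _ _
    _ = ∑ i, |x i| * p (Pi.single i 1) := by
        refine Finset.sum_congr rfl fun i _ => ?_
        rw [map_smul_eq_mul, Real.norm_eq_abs]
    _ ≤ ∑ i, ‖x‖ * p (Pi.single i 1) := by
        refine Finset.sum_le_sum fun i _ => ?_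
        exact mul_le_mul_of_nonneg_right
          (by simpa using norm_le_pi_norm x i) (apply_nonneg p _)
    _ = (∑ i, p (Pi.single i 1)) * ‖x‖ := by rw [← Finset.mul_sum, mul_comm]

lemma p_sub_le (u v : Fin n → ℝ) : p u - p v ≤ p (u - v) := by
  have h : u = v + (u - v) := by abel
  calc p u - p v = p (v + (u - v)) - p v := by rw [← h]
    _ ≤ p v + p (u - v) - p v := by linarith [map_add_le_add p v (u - v)]
    _ = p (u - v) := by ring

lemma p_cont : Continuous fun x => p x := by
  obtain ⟨C, hC0, hC⟩ := p_upper p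
  refine (LipschitzWith.of_dist_le_mul (K := C.toNNReal) (f := fun x => p x) ?_).continuous
  intro x y
  rw [Real.dist_eq, Real.coe_toNNReal C hC0, dist_eq_norm, abs_sub_le_iff]
  constructor
  · calc p x - p y ≤ p (x - y) := p_sub_le p x y
      _ ≤ C * ‖x - y‖ := hC _
  · calc p y - p x ≤ p (y - x) := p_sub_le p y x
      _ ≤ C * ‖y - x‖ := hC _
      _ = C * ‖x - y‖ := by rw [norm_sub_rev]

lemma p_lower (hp : ∀ x, p x = 0 → x = 0) :
    ∃ c : ℝ, 0 < c ∧ ∀ x : Fin n → ℝ, c * ‖x‖ ≤ p x := by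
  by_cases hn : Nonempty (Fin n)
  · have hsc : IsCompact (Metric.sphere (0 : Fin n → ℝ) 1) := isCompact_sphere 0 1
    have hsne : (Metric.sphere (0 : Fin n → ℝ) 1).Nonempty := by
      refine NormedSpace.sphere_nonempty.2 zero_le_one
    obtain ⟨z, hz, hzmin⟩ := hsc.exists_isMinOn hsne ((p_cont p).continuousOn)
    have hzne : z ≠ 0 := by
      intro h0
      have : ‖z‖ = 1 := by simpa using Metric.mem_sphere.1 hz
      rw [h0] at this; simp at this
    have hc : 0 < p z := by
      rcases lt_or_eq_of_le (apply_nonneg p z) with h | h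
      · exact h
      · exact absurd (hp z h.symm) hzne
    refine ⟨p z, hc, fun x => ?_⟩
    rcases eq_or_ne x 0 with rfl | hx
    · simp
    · have hnx : ‖x‖ ≠ 0 := norm_ne_zero_iff.2 hx
      have hmem : ‖x‖⁻¹ • x ∈ Metric.sphere (0 : Fin n → ℝ) 1 := by
        simp [norm_smul, abs_of_nonneg (inv_nonneg.2 (norm_nonneg x)),
          inv_mul_cancel₀ hnx]
      have := hzmin hmem
      have hps : p (‖x‖⁻¹ • x) = ‖x‖⁻¹ * p x := by
        rw [map_smul_eq_mul, Real.norm_eq_abs, abs_of_nonneg (inv_nonneg.2 (norm_nonneg x))]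
      simp only [isMinOn_iff] at hzmin
      have hthis : p z ≤ ‖x‖⁻¹ * p x := by
        have := hzmin _ hmem; rwa [hps] at this
      have hnxpos : (0:ℝ) < ‖x‖ := lt_of_le_of_ne (norm_nonneg x) (Ne.symm hnx)
      calc p z * ‖x‖ ≤ (‖x‖⁻¹ * p x) * ‖x‖ := by
            exact mul_le_mul_of_nonneg_right hthis (norm_nonneg x)
        _ = p x := by field_simp
  · refine ⟨1, one_pos, fun x => ?_⟩
    have : x = 0 := by ext i; exact absurd ⟨i⟩ hn
    simp [this]

end SemiBasics

section Caratheodory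
variable {E : Type*} [AddCommGroup E] [Module ℝ E]

lemma conic_caratheodory {ι : Type*} [Fintype ι] (v : ι → E) (μ : ι → ℝ) (hμ : ∀ i, 0 ≤ μ i) :
    ∃ ν : ι → ℝ, (∀ i, 0 ≤ ν i) ∧ (∀ i, ν i ≠ 0 → μ i ≠ 0) ∧
      ∑ i, ν i • v i = ∑ i, μ i • v i ∧
      LinearIndependent ℝ (fun i : {i // ν i ≠ 0} => v i) := by
  classical
  suffices H : ∀ (k : ℕ) (μ : ι → ℝ), (Finset.univ.filter fun i => μ i ≠ 0).card ≤ k →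
      (∀ i, 0 ≤ μ i) →
      ∃ ν : ι → ℝ, (∀ i, 0 ≤ ν i) ∧ (∀ i, ν i ≠ 0 → μ i ≠ 0) ∧
        ∑ i, ν i • v i = ∑ i, μ i • v i ∧
        LinearIndependent ℝ (fun i : {i // ν i ≠ 0} => v i) by
    exact H _ μ le_rfl hμ
  intro k
  induction k with
  | zero =>
    intro μ hcard hμ0
    have hall : ∀ i, μ i = 0 := by
      intro i
      by_contra h
      have : i ∈ Finset.univ.filter fun i => μ i ≠ 0 := by simp [h]
      have := Finset.card_pos.2 ⟨i, this⟩
      omega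
    have : IsEmpty {i // μ i ≠ 0} := ⟨fun ⟨i, hi⟩ => hi (hall i)⟩
    exact ⟨μ, hμ0, fun i h => h, rfl, linearIndependent_empty_type⟩
  | succ k ih =>
    intro μ hcard hμ0
    by_cases hind : LinearIndependent ℝ (fun i : {i // μ i ≠ 0} => v i)
    · exact ⟨μ, hμ0, fun i h => h, rfl, hind⟩
    · obtain ⟨g, hgsum, j₀, hgj₀⟩ := Fintype.not_linearIndependent_iff.1 hind
      -- extend g to ι, with a positive value somewhere
      have key : ∀ g : {i // μ i ≠ 0} → ℝ, (∑ i, g i • v (i : ι)) = 0 → ∀ j₀, g j₀ > 0 →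
          ∃ ν : ι → ℝ, (∀ i, 0 ≤ ν i) ∧ (∀ i, ν i ≠ 0 → μ i ≠ 0) ∧
            ∑ i, ν i • v i = ∑ i, μ i • v i ∧
            LinearIndependent ℝ (fun i : {i // ν i ≠ 0} => v i) := by
        intro g hgsum j₀ hgj₀
        set α : ι → ℝ := fun i => if h : μ i ≠ 0 then g ⟨i, h⟩ else 0 with hα
        have hαsupp : ∀ i, α i ≠ 0 → μ i ≠ 0 := by
          intro i hi
          by_contra h
          simp [hα, h] at hi
        have hαsum : ∑ i, α i • v i = 0 := by
          have h1 : ∑ i ∈ Finset.univ.filter (fun i => μ i ≠ 0), α i • v i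
              = ∑ i, α i • v i := by
            refine Finset.sum_filter_of_ne fun i _ hi => ?_
            intro h
            rw [hα] at hi; simp [h] at hi
          have h2 : ∑ i ∈ Finset.univ.filter (fun i => μ i ≠ 0), α i • v i
              = ∑ i : {i // μ i ≠ 0}, α (i : ι) • v (i : ι) := by
            refine Finset.sum_subtype _ (fun x => by simp) _
          rw [← h1, h2]
          rw [← hgsum]
          refine Finset.sum_congr rfl fun i _ => ?_
          have : α (i : ι) = g i := by simp [hα, i.2]
          rw [this]
        have hαj₀ : 0 < α (j₀ : ι) := by
          have : α (j₀ : ι) = g j₀ := by simp [hα, j₀.2]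
          rw [this]; exact hgj₀
        set T := Finset.univ.filter (fun i => 0 < α i) with hT
        have hTne : T.Nonempty := ⟨j₀, by simp [hT, hαj₀]⟩
        obtain ⟨i₁, hi₁T, hi₁min⟩ := T.exists_min_image (fun i => μ i / α i) hTne
        have hαi₁ : 0 < α i₁ := by simpa [hT] using hi₁T
        set θ := μ i₁ / α i₁ with hθ
        have hθ0 : 0 ≤ θ := div_nonneg (hμ0 i₁) hαi₁.le
        set ν : ι → ℝ := fun i => μ i - θ * α i with hν
        have hν0 : ∀ i, 0 ≤ ν i := by
          intro i
          rcases lt_or_ge 0 (α i) with hpos | hnonpos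
          · have hiT : i ∈ T := by simp [hT, hpos]
            have := hi₁min i hiT
            have : θ * α i ≤ μ i := by
              rw [hθ]
              calc μ i₁ / α i₁ * α i ≤ μ i / α i * α i :=
                mul_le_mul_of_nonneg_right this hpos.le
                _ = μ i := by field_simp
            simp [hν]; linarith
          · have : θ * α i ≤ 0 := mul_nonpos_of_nonneg_of_nonpos hθ0 hnonpos
            simp [hν]; linarith [hμ0 i]
        have hνsupp : ∀ i, ν i ≠ 0 → μ i ≠ 0 := by
          intro i hi
          by_contra h
          have hα0 : α i = 0 := by
            by_contra h'
            exact hαsupp i h' h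
          simp [hν, h, hα0] at hi
        have hνsum : ∑ i, ν i • v i = ∑ i, μ i • v i := by
          simp only [hν, sub_smul, Finset.sum_sub_distrib]
          have : ∑ i, (θ * α i) • v i = θ • ∑ i, α i • v i := by
            rw [Finset.smul_sum]
            exact Finset.sum_congr rfl fun i _ => by rw [smul_smul]
          rw [this, hαsum, smul_zero, sub_zero]
        have hνi₁ : ν i₁ = 0 := by
          simp only [hν, hθ]
          field_simp
          ring
        have hcard' : (Finset.univ.filter fun i => ν i ≠ 0).card ≤ k := by
          have hsub : (Finset.univ.filter fun i => ν i ≠ 0) ⊆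
              (Finset.univ.filter fun i => μ i ≠ 0).erase i₁ := by
            intro i hi
            simp only [Finset.mem_filter, Finset.mem_univ, true_and] at hi
            refine Finset.mem_erase.2 ⟨?_, by simp [hνsupp i hi]⟩
            rintro rfl
            exact hi hνi₁
          have hi₁mem : i₁ ∈ Finset.univ.filter fun i => μ i ≠ 0 := by
            simp [hαsupp i₁ hαi₁.ne']
          have := Finset.card_le_card hsub
          have := Finset.card_erase_of_mem hi₁mem
          omega
        obtain ⟨ν', h1, h2, h3, h4⟩ := ih ν hcard' hν0
        exact ⟨ν', h1, fun i hi => hνsupp i (h2 i hi), h3.trans hνsum, h4⟩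
      rcases lt_trichotomy (g j₀) 0 with hneg | hzero | hpos
      · refine key (fun i => - g i) ?_ j₀ (by simpa using neg_pos.2 hneg)
        simp only [neg_smul, Finset.sum_neg_distrib, hgsum, neg_zero]
      · exact absurd hzero hgj₀
      · exact key g hgsum j₀ hpos

end Caratheodory

section Cone
variable {E : Type*} [NormedAddCommGroup E] [NormedSpace ℝ E] [FiniteDimensional ℝ E]
variable {ι : Type*} [Fintype ι]

def coneOf (v : ι → E) : Set E := {x | ∃ μ : ι → ℝ, (∀ i, 0 ≤ μ i) ∧ ∑ i, μ i • v i = x}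

lemma coneOf_convex (v : ι → E) : Convex ℝ (coneOf v) := by
  rintro x ⟨μ, hμ0, rfl⟩ y ⟨σ, hσ0, rfl⟩ c d hc hd hcd
  refine ⟨fun i => c * μ i + d * σ i,
    fun i => add_nonneg (mul_nonneg hc (hμ0 i)) (mul_nonneg hd (hσ0 i)), ?_⟩
  simp only [add_smul, mul_smul, Finset.sum_add_distrib, ← Finset.smul_sum]

lemma coneOf_mem (v : ι → E) (i : ι) : v i ∈ coneOf v := by
  classical
  refine ⟨fun j => if j = i then 1 else 0, fun j => by positivity, ?_⟩
  simp [ite_smul, Finset.sum_ite_eq' Finset.univ i]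

lemma coneOf_smul_mem (v : ι → E) {x : E} (hx : x ∈ coneOf v) {c : ℝ} (hc : 0 ≤ c) :
    c • x ∈ coneOf v := by
  obtain ⟨μ, hμ0, rfl⟩ := hx
  refine ⟨fun i => c * μ i, fun i => mul_nonneg hc (hμ0 i), ?_⟩
  simp only [mul_smul, ← Finset.smul_sum]

lemma coneOf_closed (v : ι → E) : IsClosed (coneOf v) := by
  classical
  have hCs : ∀ s : Finset ι, LinearIndependent ℝ (fun i : {i // i ∈ s} => v i) →
      IsClosed {x | ∃ μ : ι → ℝ, (∀ i, 0 ≤ μ i) ∧ (∀ i, i ∉ s → μ i = 0) ∧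
        ∑ i, μ i • v i = x} := by
    intro s hs
    set L : ({i // i ∈ s} → ℝ) →ₗ[ℝ] E :=
      { toFun := fun μ => ∑ i, μ i • v (i : ι)
        map_add' := by
          intro μ σ; rw [← Finset.sum_add_distrib]
          exact Finset.sum_congr rfl fun i _ => add_smul _ _ _
        map_smul' := by intro c μ; simp [mul_smul, ← Finset.smul_sum] } with hL
    have hker : LinearMap.ker L = ⊥ := by
      rw [LinearMap.ker_eq_bot']
      intro μ hμ
      exact funext (Fintype.linearIndependent_iff.1 hs μ hμ)
    have hemb := LinearMap.isClosedEmbedding_of_injective hker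
    have horth : IsClosed {μ : {i // i ∈ s} → ℝ | ∀ i, 0 ≤ μ i} := by
      have : {μ : {i // i ∈ s} → ℝ | ∀ i, 0 ≤ μ i} = ⋂ i, {μ | 0 ≤ μ i} := by
        ext μ; simp
      rw [this]
      exact isClosed_iInter fun i => isClosed_le continuous_const (continuous_apply i)
    have himg := hemb.isClosedMap _ horth
    convert himg using 1
    ext x
    constructor
    · rintro ⟨μ, hμ0, hμs, rfl⟩
      refine ⟨fun i => μ i, fun i => hμ0 _, ?_⟩
      simp only [hL, LinearMap.coe_mk, AddHom.coe_mk]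
      show ∑ i : {i // i ∈ s}, μ i • v i = _
      rw [Finset.sum_coe_sort s (fun i => μ i • v i)]
      exact Finset.sum_subset (Finset.subset_univ s) fun i _ hi => by
        rw [hμs i hi, zero_smul]
    · rintro ⟨σ, hσ0, rfl⟩
      set μ : ι → ℝ := fun i => if h : i ∈ s then σ ⟨i, h⟩ else 0 with hμ
      have hμ0 : ∀ i, 0 ≤ μ i := by
        intro i; rw [hμ]; dsimp only; split
        · exact hσ0 _
        · exact le_refl 0
      refine ⟨μ, hμ0, fun i hi => by simp [hμ, hi], ?_⟩
      have step1 : ∑ i : ι, μ i • v i = ∑ i ∈ s, μ i • v i :=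
        (Finset.sum_subset (Finset.subset_univ s) fun i _ hi => by simp [hμ, hi]).symm
      have step2 : ∑ i ∈ s, μ i • v i = ∑ i : {i // i ∈ s}, μ (i : ι) • v (i : ι) :=
        (Finset.sum_coe_sort s (fun i => μ i • v i)).symm
      rw [step1, step2]
      show _ = ∑ i : {i // i ∈ s}, σ i • v (i : ι)
      refine Finset.sum_congr rfl fun i _ => ?_
      simp [hμ, i.2]
  have hunion : coneOf v = ⋃ (sp : {s : Finset ι //
      LinearIndependent ℝ (fun i : {i // i ∈ s} => v i)}),
      {x | ∃ μ : ι → ℝ, (∀ i, 0 ≤ μ i) ∧ (∀ i, i ∉ (sp : Finset ι) → μ i = 0) ∧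
        ∑ i, μ i • v i = x} := by
    ext x
    simp only [Set.mem_iUnion]
    constructor
    · rintro ⟨μ, hμ0, rfl⟩
      obtain ⟨ν, hν0, hνsupp, hνsum, hνind⟩ := conic_caratheodory v μ hμ0
      set s := Finset.univ.filter fun i => ν i ≠ 0 with hs
      have hind' : LinearIndependent ℝ (fun i : {i // i ∈ s} => v i) := by
        exact hνind.comp
          (fun (i : {i // i ∈ s}) => (⟨(i : ι), by
            have h2 : (i : ι) ∈ Finset.univ.filter (fun j => ν j ≠ 0) := hs ▸ i.2
            exact (Finset.mem_filter.1 h2).2⟩ : {j // ν j ≠ 0}))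
          (fun x y hxy => Subtype.ext (by simpa using hxy))
      exact ⟨⟨s, hind'⟩, ν, hν0, fun i hi => by
        by_contra h; exact hi (by simp [hs, h]), hνsum⟩
    · rintro ⟨sp, μ, hμ0, _, rfl⟩
      exact ⟨μ, hμ0, rfl⟩
  rw [hunion]
  exact isClosed_iUnion_of_finite fun sp => hCs sp.1 sp.2

end Cone

section Farkas
variable {n m : ℕ}

lemma lin_repr (f : (Fin n → ℝ) →ₗ[ℝ] ℝ) (w : Fin n → ℝ) :
    f w = ∑ i, w i * f (Pi.single i 1) := by
  have hw : w = ∑ i, w i • (Pi.single i 1 : Fin n → ℝ) := by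
    ext j
    simp [Pi.single_apply, Finset.sum_ite_eq' Finset.univ j]
  conv_lhs => rw [hw]
  rw [map_sum]
  exact Finset.sum_congr rfl fun i _ => by rw [map_smul, smul_eq_mul]

lemma prod_repr (f : ((Fin n → ℝ) × ℝ) →L[ℝ] ℝ) (w : Fin n → ℝ) (cc : ℝ) :
    f (w, cc) = (∑ i, w i * f (Pi.single i 1, 0)) + cc * f (0, 1) := by
  have hsplit : (w, cc) = ((w, 0) : (Fin n → ℝ) × ℝ) + cc • ((0 : Fin n → ℝ), (1:ℝ)) := by
    simp [Prod.ext_iff]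
  have hw : ((w, 0) : (Fin n → ℝ) × ℝ) = ∑ i, w i • ((Pi.single i 1 : Fin n → ℝ), (0:ℝ)) := by
    rw [Prod.ext_iff]
    constructor
    · simp only [Prod.fst_sum, Prod.smul_fst]
      ext j
      simp [Pi.single_apply, Finset.sum_ite_eq' Finset.univ j]
    · simp [Prod.snd_sum]
  rw [hsplit, map_add, hw, map_sum, map_smul, smul_eq_mul]
  congr 1
  exact Finset.sum_congr rfl fun i _ => by rw [map_smul, smul_eq_mul]

lemma farkas (a : Fin m → (Fin n → ℝ)) (b : Fin m → ℝ) (hne : (feas a b).Nonempty)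
    (u : Fin n → ℝ) (β : ℝ) (h : ∀ y ∈ feas a b, ∑ i, u i * y i ≤ β) :
    ∃ μ : Fin m → ℝ, (∀ t, 0 ≤ μ t) ∧ (∀ i, ∑ t, μ t * a t i = u i) ∧
      ∑ t, μ t * b t ≤ β := by
  classical
  set v : (Fin m ⊕ Unit) → ((Fin n → ℝ) × ℝ) :=
    Sum.elim (fun t => (a t, b t)) (fun _ => (0, 1)) with hv
  have hmem : ((u, β) : (Fin n → ℝ) × ℝ) ∈ coneOf v := by
    by_contra hnot
    obtain ⟨f, c, hfs, hfx⟩ :=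
      geometric_hahn_banach_closed_point (coneOf_convex v) (coneOf_closed v) hnot
    have h0mem : (0 : (Fin n → ℝ) × ℝ) ∈ coneOf v := ⟨fun _ => 0, fun _ => le_refl 0, by simp⟩
    have hc0 : (0:ℝ) < c := by
      have := hfs 0 h0mem
      rwa [map_zero] at this
    have hcone_le : ∀ z ∈ coneOf v, f z ≤ 0 := by
      intro z hz
      by_contra hpos
      push_neg at hpos
      have hmem2 : ((c + 1) / f z) • z ∈ coneOf v :=
        coneOf_smul_mem v hz (by positivity)
      have := hfs _ hmem2
      rw [map_smul, smul_eq_mul] at this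
      rw [div_mul_cancel₀ _ hpos.ne'] at this
      linarith
    set y : Fin n → ℝ := fun i => f (Pi.single i 1, 0) with hy
    set γ : ℝ := f (0, 1) with hγdef
    have hγ : γ ≤ 0 := by
      have := hcone_le _ (coneOf_mem v (Sum.inr ()))
      simpa [hv, hγdef] using this
    have hgen : ∀ t, (∑ i, a t i * y i) + b t * γ ≤ 0 := by
      intro t
      have := hcone_le _ (coneOf_mem v (Sum.inl t))
      rw [hv] at this
      simp only [Sum.elim_inl] at this
      rwa [prod_repr f (a t) (b t)] at this
    have hxval : c < (∑ i, u i * y i) + β * γ := by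
      have := hfx
      rwa [prod_repr f u β] at this
    rcases eq_or_lt_of_le hγ with hγ0 | hγneg
    · -- γ = 0
      obtain ⟨y₀, hy₀⟩ := hne
      have huy : 0 < ∑ i, u i * y i := by
        have hx2 := hxval; rw [hγ0, mul_zero, add_zero] at hx2; linarith
      set θ := max 0 ((β - (∑ i, u i * y₀ i) + 1) / (∑ i, u i * y i)) with hθ
      have hθ0 : 0 ≤ θ := le_max_left _ _
      have hfeas : y₀ + θ • y ∈ feas a b := by
        intro t
        have hat : (∑ i, a t i * y i) ≤ 0 := by
          have hg2 := hgen t; rw [hγ0, mul_zero, add_zero] at hg2; exact hg2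
        have : ∑ i, a t i * (y₀ i + θ * y i)
            = (∑ i, a t i * y₀ i) + θ * (∑ i, a t i * y i) := by
          rw [Finset.mul_sum]
          rw [← Finset.sum_add_distrib]
          exact Finset.sum_congr rfl fun i _ => by ring
        have h2 : θ * (∑ i, a t i * y i) ≤ 0 :=
          mul_nonpos_of_nonneg_of_nonpos hθ0 hat
        calc ∑ i, a t i * (y₀ + θ • y) i = ∑ i, a t i * (y₀ i + θ * y i) := rfl
          _ = (∑ i, a t i * y₀ i) + θ * (∑ i, a t i * y i) := this
          _ ≤ (∑ i, a t i * y₀ i) := by linarith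
          _ ≤ b t := hy₀ t
      have hval : β < ∑ i, u i * (y₀ + θ • y) i := by
        have hexp : ∑ i, u i * (y₀ + θ • y) i
            = (∑ i, u i * y₀ i) + θ * (∑ i, u i * y i) := by
          have hr : ∑ i, u i * (y₀ + θ • y) i = ∑ i, u i * (y₀ i + θ * y i) := rfl
          rw [hr, Finset.mul_sum, ← Finset.sum_add_distrib]
          exact Finset.sum_congr rfl fun i _ => by ring
        rw [hexp]
        rcases le_or_gt ((β - (∑ i, u i * y₀ i) + 1) / (∑ i, u i * y i)) 0 with hq | hq
        · have hθeq : θ = 0 := by rw [hθ]; exact max_eq_left hq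
          have : β - (∑ i, u i * y₀ i) + 1 ≤ 0 := by
            by_contra hcon
            push_neg at hcon
            have := div_pos hcon huy
            linarith
          rw [hθeq]; linarith
        · have hθeq : θ = (β - (∑ i, u i * y₀ i) + 1) / (∑ i, u i * y i) := by
            rw [hθ]; exact max_eq_right hq.le
          rw [hθeq, div_mul_cancel₀ _ huy.ne']
          linarith
      exact absurd (h _ hfeas) (not_le.2 hval)
    · -- γ < 0
      set yhat := (-γ)⁻¹ • y with hyhat
      have hnegγ : 0 < -γ := by linarith
      have hfeas : yhat ∈ feas a b := by
        intro t
        have := hgen t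
        have h2 : ∑ i, a t i * yhat i = (-γ)⁻¹ * ∑ i, a t i * y i := by
          rw [Finset.mul_sum]
          exact Finset.sum_congr rfl fun i _ => by rw [hyhat, Pi.smul_apply, smul_eq_mul]; ring
        rw [h2]
        rw [inv_mul_le_iff₀ hnegγ]
        nlinarith
      have := h yhat hfeas
      have h3 : ∑ i, u i * yhat i = (-γ)⁻¹ * ∑ i, u i * y i := by
        rw [Finset.mul_sum]
        exact Finset.sum_congr rfl fun i _ => by rw [hyhat, Pi.smul_apply, smul_eq_mul]; ring
      rw [h3, inv_mul_le_iff₀ hnegγ] at this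
      nlinarith
  obtain ⟨μ', hμ'0, hsum⟩ := hmem
  refine ⟨fun t => μ' (Sum.inl t), fun t => hμ'0 _, ?_, ?_⟩
  · intro i
    have h1 : (∑ s : Fin m ⊕ Unit, μ' s • v s).1 = u := by rw [hsum]
    rw [Prod.fst_sum] at h1
    rw [Fintype.sum_sum_type] at h1
    have h2 : ∀ w : Fin m ⊕ Unit, (μ' w • v w).1 = μ' w • (v w).1 := fun w => rfl
    simp [hv] at h1
    have := congrFun h1 i
    rw [Finset.sum_apply] at this
    simpa [mul_comm] using this
  · have h1 : (∑ s : Fin m ⊕ Unit, μ' s • v s).2 = β := by rw [hsum]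
    rw [Prod.snd_sum, Fintype.sum_sum_type] at h1
    have h2 : ∀ w : Fin m ⊕ Unit, (μ' w • v w).2 = μ' w • (v w).2 := fun w => rfl
    simp [hv] at h1
    have := hμ'0 (Sum.inr ())
    show ∑ t : Fin m, μ' (Sum.inl t) * b t ≤ β
    linarith [h1]

end Farkas

section Dual
variable {n : ℕ} (p : Seminorm ℝ (Fin n → ℝ))

lemma dot_bound (u x : Fin n → ℝ) : |∑ i, u i * x i| ≤ (∑ i, |u i|) * ‖x‖ := by
  calc |∑ i, u i * x i| ≤ ∑ i, |u i * x i| := Finset.abs_sum_le_sum_abs _ _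
    _ ≤ ∑ i, |u i| * ‖x‖ := by
        refine Finset.sum_le_sum fun i _ => ?_
        rw [abs_mul]
        exact mul_le_mul_of_nonneg_left (by simpa using norm_le_pi_norm x i) (abs_nonneg _)
    _ = (∑ i, |u i|) * ‖x‖ := by rw [Finset.sum_mul]

noncomputable def dstar (u : Fin n → ℝ) : ℝ :=
  sSup ((fun x => |∑ i, u i * x i|) '' {x | p x ≤ 1})

lemma dstar_bdd (hp : ∀ x, p x = 0 → x = 0) (u : Fin n → ℝ) :
    BddAbove ((fun x => |∑ i, u i * x i|) '' {x | p x ≤ 1}) := by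
  obtain ⟨c, hc, hcl⟩ := p_lower p hp
  refine ⟨(∑ i, |u i|) * c⁻¹, ?_⟩
  rintro r ⟨x, hx, rfl⟩
  have hxn : ‖x‖ ≤ c⁻¹ := by
    have h1 : c * ‖x‖ ≤ 1 := (hcl x).trans hx
    have h2 : ‖x‖ ≤ 1 / c := (le_div_iff₀' hc).2 h1
    rwa [one_div] at h2
  calc |∑ i, u i * x i| ≤ (∑ i, |u i|) * ‖x‖ := dot_bound u x
    _ ≤ (∑ i, |u i|) * c⁻¹ := by
        refine mul_le_mul_of_nonneg_left hxn (Finset.sum_nonneg fun i _ => abs_nonneg _)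

lemma dstar_mem_le (hp : ∀ x, p x = 0 → x = 0) (u x : Fin n → ℝ) (hx : p x ≤ 1) :
    |∑ i, u i * x i| ≤ dstar p u :=
  le_csSup (dstar_bdd p hp u) ⟨x, hx, rfl⟩

lemma dstar_nonneg (hp : ∀ x, p x = 0 → x = 0) (u : Fin n → ℝ) : 0 ≤ dstar p u := by
  have := dstar_mem_le p hp u 0 (by simp)
  have h0 : |∑ i, u i * (0 : Fin n → ℝ) i| = 0 := by simp
  linarith [abs_nonneg (∑ i, u i * (0 : Fin n → ℝ) i)]

lemma abs_dot_le_dstar (hp : ∀ x, p x = 0 → x = 0) (u q : Fin n → ℝ) :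
    |∑ i, u i * q i| ≤ dstar p u * p q := by
  rcases eq_or_lt_of_le (apply_nonneg p q) with h0 | hpos
  · have : q = 0 := hp q h0.symm
    simp [this]
  · have hx : p ((p q)⁻¹ • q) ≤ 1 := by
      rw [map_smul_eq_mul, Real.norm_eq_abs, abs_of_nonneg (inv_nonneg.2 (apply_nonneg p q)),
        inv_mul_cancel₀ hpos.ne']
    have := dstar_mem_le p hp u _ hx
    have hdot : |∑ i, u i * ((p q)⁻¹ • q) i| = (p q)⁻¹ * |∑ i, u i * q i| := by
      have : ∑ i, u i * ((p q)⁻¹ • q) i = (p q)⁻¹ * ∑ i, u i * q i := by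
        rw [Finset.mul_sum]
        exact Finset.sum_congr rfl fun i _ => by rw [Pi.smul_apply, smul_eq_mul]; ring
      rw [this, abs_mul, abs_of_nonneg (inv_nonneg.2 (apply_nonneg p q))]
    rw [hdot] at this
    calc |∑ i, u i * q i| = ((p q)⁻¹ * |∑ i, u i * q i|) * p q := by field_simp
      _ ≤ dstar p u * p q := mul_le_mul_of_nonneg_right this (apply_nonneg p q)

lemma dstar_pos (hp : ∀ x, p x = 0 → x = 0) (u : Fin n → ℝ) (hu : u ≠ 0) :
    0 < dstar p u := by
  obtain ⟨i, hi⟩ : ∃ i, u i ≠ 0 := by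
    by_contra hcon
    push_neg at hcon
    exact hu (funext hcon)
  have hsing : (Pi.single i 1 : Fin n → ℝ) ≠ 0 := by
    intro h
    have := congrFun h i
    simp at this
  have hpp : 0 < p (Pi.single i 1) := by
    rcases eq_or_lt_of_le (apply_nonneg p (Pi.single i 1)) with h0 | h
    · exact absurd (hp _ h0.symm) hsing
    · exact h
  have hx : p ((p (Pi.single i 1))⁻¹ • (Pi.single i 1 : Fin n → ℝ)) ≤ 1 := by
    rw [map_smul_eq_mul, Real.norm_eq_abs, abs_of_nonneg (inv_nonneg.2 (apply_nonneg p _)),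
      inv_mul_cancel₀ hpp.ne']
  have hmem := dstar_mem_le p hp u _ hx
  have hval : |∑ j, u j * ((p (Pi.single i 1))⁻¹ • (Pi.single i 1 : Fin n → ℝ)) j|
      = (p (Pi.single i 1))⁻¹ * |u i| := by
    have : ∑ j, u j * ((p (Pi.single i 1))⁻¹ • (Pi.single i 1 : Fin n → ℝ)) j
        = (p (Pi.single i 1))⁻¹ * u i := by
      rw [Finset.sum_eq_single i]
      · rw [Pi.smul_apply, smul_eq_mul]; simp [Pi.single_apply]; ring
      · intro j _ hj
        rw [Pi.smul_apply, smul_eq_mul]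
        simp [Pi.single_apply, hj]
      · intro hh; exact absurd (Finset.mem_univ i) hh
    rw [this, abs_mul, abs_of_nonneg (inv_nonneg.2 (apply_nonneg p _))]
  rw [hval] at hmem
  have : 0 < (p (Pi.single i 1))⁻¹ * |u i| := by positivity
  linarith

lemma dualNorm_le_ofReal (u : Fin n → ℝ) (c : ℝ)
    (h : ∀ x, p x ≤ 1 → |∑ i, u i * x i| ≤ c) : dualNorm p u ≤ ENNReal.ofReal c := by
  refine iSup₂_le fun x hx => ?_
  exact ENNReal.ofReal_le_ofReal (h x hx)

lemma ofReal_le_dualNorm (u x : Fin n → ℝ) (hx : p x ≤ 1) :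
    ENNReal.ofReal |∑ i, u i * x i| ≤ dualNorm p u := by
  exact le_iSup₂ (f := fun x (_ : p x ≤ 1) => ENNReal.ofReal |∑ i, u i * x i|) x hx

end Dual

section Nearest
variable {n m : ℕ}

lemma feas_closed (a : Fin m → (Fin n → ℝ)) (b : Fin m → ℝ) : IsClosed (feas a b) := by
  have heq : feas a b = ⋂ t, {x : Fin n → ℝ | ∑ i, a t i * x i ≤ b t} := by
    ext x; simp [feas, Set.mem_iInter]
  rw [heq]
  refine isClosed_iInter fun t => isClosed_le ?_ continuous_const
  exact continuous_finset_sum _ fun i _ => continuous_const.mul (continuous_apply i)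

lemma exists_nearest (p : Seminorm ℝ (Fin n → ℝ)) (hp : ∀ x, p x = 0 → x = 0)
    (a : Fin m → (Fin n → ℝ)) (b : Fin m → ℝ) (hne : (feas a b).Nonempty) (x : Fin n → ℝ) :
    ∃ ys ∈ feas a b, ∀ y ∈ feas a b, p (x - ys) ≤ p (x - y) := by
  obtain ⟨y₀, hy₀⟩ := hne
  obtain ⟨c, hc, hcl⟩ := p_lower p hp
  set R := p (x - y₀) with hR
  set K := feas a b ∩ {y | p (x - y) ≤ R} with hK
  have hpc : Continuous fun y : Fin n → ℝ => p (x - y) :=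
    (p_cont p).comp (continuous_const.sub continuous_id)
  have hKclosed : IsClosed K :=
    (feas_closed a b).inter (isClosed_le hpc continuous_const)
  have hKbdd : Bornology.IsBounded K := by
    refine (Metric.isBounded_closedBall (x := (0 : Fin n → ℝ)) (r := ‖x‖ + R / c)).subset ?_
    rintro y ⟨_, hy2⟩
    simp only [Metric.mem_closedBall, dist_zero_right]
    have h1 : c * ‖x - y‖ ≤ R := (hcl (x - y)).trans hy2
    have h2 : ‖x - y‖ ≤ R / c := (le_div_iff₀' hc).2 h1
    calc ‖y‖ = ‖x - (x - y)‖ := by congr 1; abel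
      _ ≤ ‖x‖ + ‖x - y‖ := norm_sub_le _ _
      _ ≤ ‖x‖ + R / c := by linarith
  have hKcompact : IsCompact K := Metric.isCompact_of_isClosed_isBounded hKclosed hKbdd
  have hKne : K.Nonempty := ⟨y₀, hy₀, le_refl R⟩
  obtain ⟨ys, hysK, hysmin⟩ := hKcompact.exists_isMinOn hKne hpc.continuousOn
  simp only [isMinOn_iff] at hysmin
  refine ⟨ys, hysK.1, fun y hy => ?_⟩
  rcases le_or_gt (p (x - y)) R with hle | hgt
  · exact hysmin y ⟨hy, hle⟩
  · calc p (x - ys) ≤ R := hysK.2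
      _ ≤ p (x - y) := hgt.le
end Nearest

section Main
variable {n m : ℕ}

lemma feas_convex (a : Fin m → (Fin n → ℝ)) (b : Fin m → ℝ) : Convex ℝ (feas a b) := by
  intro y1 h1 y2 h2 c1 c2 hc1 hc2 hsum
  intro t
  have hexp : ∑ i, a t i * (c1 • y1 + c2 • y2) i
      = c1 * (∑ i, a t i * y1 i) + c2 * (∑ i, a t i * y2 i) := by
    rw [Finset.mul_sum, Finset.mul_sum, ← Finset.sum_add_distrib]
    refine Finset.sum_congr rfl fun i _ => ?_
    simp only [Pi.add_apply, Pi.smul_apply, smul_eq_mul]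
    ring
  rw [hexp]
  calc c1 * (∑ i, a t i * y1 i) + c2 * (∑ i, a t i * y2 i)
      ≤ c1 * b t + c2 * b t :=
        add_le_add (mul_le_mul_of_nonneg_left (h1 t) hc1)
          (mul_le_mul_of_nonneg_left (h2 t) hc2)
    _ = b t := by rw [← add_mul, hsum, one_mul]

lemma dot_sub (u w q : Fin n → ℝ) :
    ∑ i, u i * (w - q) i = (∑ i, u i * w i) - ∑ i, u i * q i := by
  rw [← Finset.sum_sub_distrib]
  exact Finset.sum_congr rfl fun i _ => by simp [Pi.sub_apply]; ring

lemma dot_swap (a : Fin m → (Fin n → ℝ)) (c : Fin m → ℝ) (q : Fin n → ℝ) :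
    ∑ t, c t * (∑ i, a t i * q i) = ∑ i, (∑ t, c t * a t i) * q i := by
  calc ∑ t, c t * (∑ i, a t i * q i) = ∑ t, ∑ i, c t * (a t i * q i) := by
        exact Finset.sum_congr rfl fun t _ => Finset.mul_sum _ _ _
    _ = ∑ i, ∑ t, c t * (a t i * q i) := Finset.sum_comm
    _ = ∑ i, (∑ t, c t * a t i) * q i := by
        refine Finset.sum_congr rfl fun i _ => ?_
        rw [Finset.sum_mul]
        exact Finset.sum_congr rfl fun t _ => by ring

lemma upper_core (a : Fin m → (Fin n → ℝ)) (p : Seminorm ℝ (Fin n → ℝ))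
    (hp : ∀ x, p x = 0 → x = 0) (b : Fin m → ℝ) (hne : (feas a b).Nonempty)
    (x : Fin n → ℝ) (hx : x ∉ feas a b) :
    ∃ J : Set (Fin m),
      (LinearIndependent ℝ (fun v : (a '' J) => (v : Fin n → ℝ)) ∧
        Submodule.span ℝ (a '' J) = Submodule.span ℝ (Set.range a)) ∧
      pDist p x (feas a b) / infEdist b {b' : Fin m → ℝ | x ∈ feas a b'}
        ≤ (dualDist0 p (convexHull ℝ (a '' J)))⁻¹ := by
  classical
  obtain ⟨ys, hys, hysmin⟩ := exists_nearest p hp a b hne x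
  set d := p (x - ys) with hd
  have hd0 : 0 < d := by
    rcases eq_or_lt_of_le (apply_nonneg p (x - ys)) with h0 | h
    · exfalso
      have : x - ys = 0 := hp _ h0.symm
      have : x = ys := by
        have := sub_eq_zero.1 this; exact this
      exact hx (this ▸ hys)
    · exact h
  have hpdist : pDist p x (feas a b) = ENNReal.ofReal d := by
    refine le_antisymm (iInf₂_le ys hys) (le_iInf₂ fun y hy => ?_)
    exact ENNReal.ofReal_le_ofReal (hysmin y hy)
  -- separation
  set s : Set (Fin n → ℝ) := {z | p (x - z) < d} with hsdef
  have hsopen : IsOpen s := isOpen_lt ((p_cont p).comp (continuous_const.sub continuous_id))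
    continuous_const
  have hsconv : Convex ℝ s := by
    intro z1 hz1 z2 hz2 c1 c2 hc1 hc2 hsum
    have hxe : x - (c1 • z1 + c2 • z2) = c1 • (x - z1) + c2 • (x - z2) := by
      have hx1 : c1 • x + c2 • x = x := by rw [← add_smul, hsum, one_smul]
      calc x - (c1 • z1 + c2 • z2) = (c1 • x + c2 • x) - (c1 • z1 + c2 • z2) := by rw [hx1]
        _ = c1 • (x - z1) + c2 • (x - z2) := by
            rw [smul_sub, smul_sub]; abel
    have hle : p (x - (c1 • z1 + c2 • z2)) ≤ c1 * p (x - z1) + c2 * p (x - z2) := by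
      rw [hxe]
      calc p (c1 • (x - z1) + c2 • (x - z2)) ≤ p (c1 • (x - z1)) + p (c2 • (x - z2)) :=
          map_add_le_add p _ _
        _ = c1 * p (x - z1) + c2 * p (x - z2) := by
            rw [map_smul_eq_mul, map_smul_eq_mul, Real.norm_eq_abs, Real.norm_eq_abs,
              abs_of_nonneg hc1, abs_of_nonneg hc2]
    have h1 : p (x - z1) < d := hz1
    have h2 : p (x - z2) < d := hz2
    show p (x - (c1 • z1 + c2 • z2)) < d
    rcases eq_or_lt_of_le hc1 with hc10 | hc1pos
    · have hc21 : c2 = 1 := by linarith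
      calc p (x - (c1 • z1 + c2 • z2)) ≤ c1 * p (x - z1) + c2 * p (x - z2) := hle
        _ = p (x - z2) := by rw [← hc10, hc21]; ring
        _ < d := h2
    · calc p (x - (c1 • z1 + c2 • z2)) ≤ c1 * p (x - z1) + c2 * p (x - z2) := hle
        _ < c1 * d + c2 * d := by
            have hb1 : c1 * p (x - z1) < c1 * d := by
              exact mul_lt_mul_of_pos_left h1 hc1pos
            have hb2 : c2 * p (x - z2) ≤ c2 * d := mul_le_mul_of_nonneg_left h2.le hc2
            linarith
        _ = d := by rw [← add_mul, hsum, one_mul]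
  have hdisj : Disjoint s (feas a b) := by
    rw [Set.disjoint_left]
    intro z hz hzfeas
    exact absurd (hysmin z hzfeas) (not_le.2 hz)
  obtain ⟨f, cf, hfs, hffeas⟩ := geometric_hahn_banach_open hsconv hsopen
    (feas_convex a b) hdisj
  set u : Fin n → ℝ := fun i => -(f (Pi.single i 1)) with hu
  have hfu : ∀ w, ∑ i, u i * w i = -(f w) := by
    intro w
    have hrepr : f w = ∑ i, w i * f (Pi.single i 1) := by
      have := lin_repr (f.toLinearMap) w
      simpa using this
    rw [hrepr, ← Finset.sum_neg_distrib]
    exact Finset.sum_congr rfl fun i _ => by simp [hu]; ring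
  set c' := -cf with hc'
  have hs_gt : ∀ z ∈ s, c' < ∑ i, u i * z i := by
    intro z hz
    rw [hfu]
    have := hfs z hz
    simp only [hc']
    linarith
  have hfeas_le : ∀ y ∈ feas a b, ∑ i, u i * y i ≤ c' := by
    intro y hy
    rw [hfu]
    have := hffeas y hy
    simp only [hc']
    linarith
  have hxs : x ∈ s := by simp [hsdef, hd0]
  have hu0 : u ≠ 0 := by
    intro h0
    have h1 := hs_gt x hxs
    have h2 := hfeas_le ys hys
    rw [h0] at h1 h2
    simp at h1 h2
    linarith
  set P := dstar p u with hP
  have hPpos : 0 < P := dstar_pos p hp u hu0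
  -- sup over ball
  have hkey1 : ∀ w : Fin n → ℝ, p w < d → ∑ i, u i * w i < (∑ i, u i * x i) - c' := by
    intro w hw
    have hmem : x - w ∈ s := by
      simp only [hsdef, Set.mem_setOf_eq]
      have : x - (x - w) = w := by abel
      rw [this]; exact hw
    have := hs_gt _ hmem
    rw [dot_sub] at this
    linarith
  have hdP : d * P ≤ (∑ i, u i * x i) - c' := by
    set B := (∑ i, u i * x i) - c' with hB
    have hBpos : 0 < B := by
      have := hs_gt x hxs
      simp only [hB]; linarith
    have hstep : ∀ x' : Fin n → ℝ, p x' ≤ 1 → d * |∑ i, u i * x' i| ≤ B := by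
      intro x' hx'
      set v := ∑ i, u i * x' i with hv
      have hθ : ∀ θ : ℝ, 0 ≤ θ → θ < d → θ * |v| ≤ B := by
        intro θ hθ0 hθd
        rcases eq_or_lt_of_le hθ0 with h0 | hpos
        · rw [← h0]; simpa using hBpos.le
        · have hpw : p (θ • x') < d := by
            rw [map_smul_eq_mul, Real.norm_eq_abs, abs_of_nonneg hθ0]
            calc θ * p x' ≤ θ * 1 := mul_le_mul_of_nonneg_left hx' hθ0
              _ = θ := mul_one θ
              _ < d := hθd
          have hpw' : p (-(θ • x')) < d := by rwa [map_neg_eq_map]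
          have h1 := hkey1 _ hpw
          have h2 := hkey1 _ hpw'
          have e1 : ∑ i, u i * (θ • x') i = θ * v := by
            rw [hv, Finset.mul_sum]
            exact Finset.sum_congr rfl fun i _ => by rw [Pi.smul_apply, smul_eq_mul]; ring
          have e2 : ∑ i, u i * (-(θ • x')) i = -(θ * v) := by
            rw [← e1, ← Finset.sum_neg_distrib]
            exact Finset.sum_congr rfl fun i _ => by simp
          rw [e1] at h1
          rw [e2] at h2
          rcases abs_cases v with ⟨hav, _⟩ | ⟨hav, _⟩
          · rw [mul_comm θ |v|, hav]; nlinarith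
          · rw [mul_comm θ |v|, hav]; nlinarith
      by_contra hcon
      push_neg at hcon
      have hvpos : 0 < |v| := by
        by_contra hv0
        push_neg at hv0
        have : |v| = 0 := le_antisymm hv0 (abs_nonneg v)
        rw [this, mul_zero] at hcon
        linarith
      have hq : B / |v| < d := by
        rw [div_lt_iff₀ hvpos]
        linarith [hcon]
      set θ := max 0 ((B / |v| + d) / 2) with hθdef
      have hθ0 : 0 ≤ θ := le_max_left _ _
      have hmid_lt : (B / |v| + d) / 2 < d := by linarith
      have hmid_gt : B / |v| < (B / |v| + d) / 2 := by linarith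
      have hθd : θ < d := by
        rw [hθdef]
        exact max_lt hd0 hmid_lt
      have hθB : B < θ * |v| := by
        have hθge : B / |v| < θ := lt_of_lt_of_le hmid_gt (le_max_right _ _)
        calc B = (B / |v|) * |v| := by field_simp
          _ < θ * |v| := by exact mul_lt_mul_of_pos_right hθge hvpos
      exact absurd (hθ _ hθ0 hθd) (not_le.2 hθB)
    have hPle : P ≤ B / d := by
      refine csSup_le ⟨|∑ i, u i * (0:Fin n → ℝ) i|, ⟨0, by simp, rfl⟩⟩ ?_
      rintro r ⟨x', hx', rfl⟩
      have := hstep x' hx'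
      rw [le_div_iff₀ hd0]
      linarith [this]
    calc d * P ≤ d * (B / d) := mul_le_mul_of_nonneg_left hPle hd0.le
      _ = B := by field_simp
  -- nearest point attains
  have hys_up : (∑ i, u i * x i) - d * P ≤ ∑ i, u i * ys i := by
    have h1 : ∑ i, u i * (x - ys) i ≤ P * d := by
      calc ∑ i, u i * (x - ys) i ≤ |∑ i, u i * (x - ys) i| := le_abs_self _
        _ ≤ P * p (x - ys) := abs_dot_le_dstar p hp u (x - ys)
        _ = P * d := by rw [← hd]
    rw [dot_sub] at h1
    linarith
  have hβ : ∀ y ∈ feas a b, ∑ i, u i * y i ≤ ∑ i, u i * ys i := by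
    intro y hy
    calc ∑ i, u i * y i ≤ c' := hfeas_le y hy
      _ ≤ (∑ i, u i * x i) - d * P := by linarith [hdP]
      _ ≤ ∑ i, u i * ys i := hys_up
  have hdPeq : (∑ i, u i * x i) - (∑ i, u i * ys i) = d * P := by
    have h1 : ∑ i, u i * ys i ≤ c' := hfeas_le ys hys
    have h2 := hys_up
    linarith [hdP]
  obtain ⟨μ, hμ0, hμA, hμb⟩ := farkas a b hne u (∑ i, u i * ys i) hβ
  -- complementary slackness
  have hswap : ∀ q : Fin n → ℝ, ∑ t, μ t * (∑ i, a t i * q i) = ∑ i, u i * q i := by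
    intro q
    calc ∑ t, μ t * (∑ i, a t i * q i) = ∑ t, ∑ i, μ t * (a t i * q i) := by
          exact Finset.sum_congr rfl fun t _ => Finset.mul_sum _ _ _
      _ = ∑ i, ∑ t, μ t * (a t i * q i) := Finset.sum_comm
      _ = ∑ i, (∑ t, μ t * a t i) * q i := by
          refine Finset.sum_congr rfl fun i _ => ?_
          rw [Finset.sum_mul]
          exact Finset.sum_congr rfl fun t _ => by ring
      _ = ∑ i, u i * q i := by
          exact Finset.sum_congr rfl fun i _ => by rw [hμA i]
  -- complementary slackness
  have hslack : ∀ t, μ t ≠ 0 → ∑ i, a t i * ys i = b t := by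
    have hexp : ∑ t, μ t * (b t - ∑ i, a t i * ys i)
        = (∑ t, μ t * b t) - (∑ i, u i * ys i) := by
      rw [← hswap ys, ← Finset.sum_sub_distrib]
      exact Finset.sum_congr rfl fun t _ => by ring
    have hge : ∀ t ∈ Finset.univ, 0 ≤ μ t * (b t - ∑ i, a t i * ys i) := fun t _ =>
      mul_nonneg (hμ0 t) (sub_nonneg.2 (hys t))
    have hle0 : ∑ t, μ t * (b t - ∑ i, a t i * ys i) ≤ 0 := by
      rw [hexp]; linarith [hμb]
    have hzero : ∑ t, μ t * (b t - ∑ i, a t i * ys i) = 0 :=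
      le_antisymm hle0 (Finset.sum_nonneg hge)
    have hall := (Finset.sum_eq_zero_iff_of_nonneg hge).1 hzero
    intro t ht
    have := hall t (Finset.mem_univ t)
    have h2 : b t - ∑ i, a t i * ys i = 0 := by
      rcases mul_eq_zero.1 this with h | h
      · exact absurd h ht
      · exact h
    linarith [h2]
  obtain ⟨ν, hν0, hνsupp, hνsum, hνind⟩ := conic_caratheodory a μ hμ0
  have hμAfun : ∑ t, μ t • a t = u := by
    funext i
    rw [Finset.sum_apply]
    have : ∀ t, (μ t • a t) i = μ t * a t i := fun t => rfl
    simp only [this]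
    exact hμA i
  have hνAfun : ∑ t, ν t • a t = u := hνsum.trans hμAfun
  have hνA : ∀ i, ∑ t, ν t * a t i = u i := by
    intro i
    have := congrFun hνAfun i
    rw [Finset.sum_apply] at this
    have h2 : ∀ t, (ν t • a t) i = ν t * a t i := fun t => rfl
    simpa only [h2] using this
  set s0 := ∑ t, ν t with hs0
  have hs00 : 0 ≤ s0 := Finset.sum_nonneg fun t _ => hν0 t
  have hs0pos : 0 < s0 := by
    rcases eq_or_lt_of_le hs00 with h0 | h
    · exfalso
      have hallν := (Finset.sum_eq_zero_iff_of_nonneg (fun t _ => hν0 t)).1 h0.symm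
      refine hu0 (funext fun i => ?_)
      rw [← hνA i]
      refine Finset.sum_eq_zero fun t _ => by rw [hallν t (Finset.mem_univ t), zero_mul]
    · exact h
  obtain ⟨t₀, ht₀⟩ : ∃ t, b t < ∑ i, a t i * x i := by
    by_contra hcon
    push_neg at hcon
    exact hx fun t => hcon t
  set rmax := Finset.univ.sup' ⟨t₀, Finset.mem_univ t₀⟩
    (fun t => (∑ i, a t i * x i) - b t) with hrmaxdef
  have hrmax_ge : ∀ t, (∑ i, a t i * x i) - b t ≤ rmax := fun t => by
    rw [hrmaxdef]
    exact Finset.le_sup' (fun t => (∑ i, a t i * x i) - b t) (Finset.mem_univ t)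
  have hrmax_pos : 0 < rmax := lt_of_lt_of_le (by linarith [ht₀]) (hrmax_ge t₀)
  have hdPle : d * P ≤ s0 * rmax := by
    have hx' : ∑ t, ν t * (∑ i, a t i * x i) = ∑ i, u i * x i := by
      rw [dot_swap]
      exact Finset.sum_congr rfl fun i _ => by rw [hνA i]
    have hys' : ∑ t, ν t * b t = ∑ i, u i * ys i := by
      have h1 : ∑ t, ν t * b t = ∑ t, ν t * (∑ i, a t i * ys i) := by
        refine Finset.sum_congr rfl fun t _ => ?_
        rcases eq_or_ne (ν t) 0 with h0 | hne0
        · rw [h0, zero_mul, zero_mul]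
        · rw [hslack t (hνsupp t hne0)]
      rw [h1, dot_swap]
      exact Finset.sum_congr rfl fun i _ => by rw [hνA i]
    have h1 : d * P = ∑ t, ν t * ((∑ i, a t i * x i) - b t) := by
      rw [← hdPeq]
      rw [Finset.sum_congr rfl (fun t (_ : t ∈ Finset.univ) => mul_sub (ν t) _ (b t)),
        Finset.sum_sub_distrib, hx', hys']
    rw [h1]
    calc ∑ t, ν t * ((∑ i, a t i * x i) - b t) ≤ ∑ t, ν t * rmax :=
        Finset.sum_le_sum fun t _ => mul_le_mul_of_nonneg_left (hrmax_ge t) (hν0 t)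
      _ = s0 * rmax := by rw [← Finset.sum_mul]
  have hdenom : ENNReal.ofReal rmax ≤ infEdist b {b' : Fin m → ℝ | x ∈ feas a b'} := by
    refine Metric.le_infEDist.2 ?_
    intro b' hb'
    obtain ⟨t₁, _, ht₁⟩ := Finset.exists_mem_eq_sup' ⟨t₀, Finset.mem_univ t₀⟩
      (fun t => (∑ i, a t i * x i) - b t)
    have h1 : ∑ i, a t₁ i * x i ≤ b' t₁ := hb' t₁
    calc ENNReal.ofReal rmax = ENNReal.ofReal ((∑ i, a t₁ i * x i) - b t₁) := by
          rw [hrmaxdef, ht₁]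
      _ ≤ edist (b t₁) (b' t₁) := by
          rw [edist_dist, Real.dist_eq]
          refine ENNReal.ofReal_le_ofReal ?_
          calc (∑ i, a t₁ i * x i) - b t₁ ≤ b' t₁ - b t₁ := by linarith
            _ ≤ |b' t₁ - b t₁| := le_abs_self _
            _ = |b t₁ - b' t₁| := abs_sub_comm _ _
      _ ≤ edist b b' := edist_le_pi_edist b b' t₁
  set J₀ : Set (Fin m) := {t | ν t ≠ 0} with hJ₀def
  have hJ₀ind : LinearIndepOn ℝ id (a '' J₀) :=
    LinearIndepOn.id_image (s := J₀) (v := a) hνind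
  have hJ₀sub : a '' J₀ ⊆ Set.range a := by
    rintro _ ⟨t, _, rfl⟩; exact ⟨t, rfl⟩
  set B := hJ₀ind.extend hJ₀sub with hBdef
  set J : Set (Fin m) := {t | a t ∈ B} with hJdef
  have haJ : a '' J = B := by
    apply Set.Subset.antisymm
    · rintro _ ⟨t, ht, rfl⟩; exact ht
    · intro v hv
      obtain ⟨t, rfl⟩ := hJ₀ind.extend_subset hJ₀sub hv
      exact ⟨t, hv, rfl⟩
  have hJind : LinearIndependent ℝ (fun v : (a '' J) => (v : Fin n → ℝ)) := by
    rw [haJ]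
    exact hJ₀ind.linearIndepOn_extend hJ₀sub
  have hJspan : Submodule.span ℝ (a '' J) = Submodule.span ℝ (Set.range a) := by
    rw [haJ]
    refine le_antisymm (Submodule.span_mono (hJ₀ind.extend_subset hJ₀sub)) ?_
    exact Submodule.span_le.2 (hJ₀ind.subset_span_extend hJ₀sub)
  have hJ₀J : J₀ ⊆ J := by
    intro t ht
    exact hJ₀ind.subset_extend hJ₀sub (Set.mem_image_of_mem a ht)
  set w := s0⁻¹ • u with hwdef
  have hwmem : w ∈ convexHull ℝ (a '' J₀) := by
    have hcm := Finset.centerMass_mem_convexHull (R := ℝ) (s := a '' J₀)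
      (Finset.univ.filter fun t => ν t ≠ 0) (w := ν) (z := a)
      (fun t ht => hν0 t)
      (by
        have : ∑ t ∈ Finset.univ.filter (fun t => ν t ≠ 0), ν t = s0 := by
          rw [hs0]
          exact Finset.sum_filter_ne_zero _
        rw [this]; exact hs0pos)
      (fun t ht => ⟨t, by simpa [hJ₀def] using (Finset.mem_filter.1 ht).2, rfl⟩)
    have hcmval : (Finset.univ.filter fun t => ν t ≠ 0).centerMass ν a = w := by
      rw [Finset.centerMass]
      have h1 : ∑ t ∈ Finset.univ.filter (fun t => ν t ≠ 0), ν t = s0 :=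
        Finset.sum_filter_ne_zero _
      have h2 : ∑ t ∈ Finset.univ.filter (fun t => ν t ≠ 0), ν t • a t = u := by
        rw [Finset.sum_filter_of_ne (fun t _ h => by
          intro h0
          rw [h0, zero_smul] at h
          exact h rfl)]
        exact hνAfun
      rw [h1, h2, hwdef]
    rwa [hcmval] at hcm
  have hwdual : dualNorm p w ≤ ENNReal.ofReal (P / s0) := by
    refine dualNorm_le_ofReal p w _ fun x' hx' => ?_
    have hexp : ∑ i, w i * x' i = s0⁻¹ * ∑ i, u i * x' i := by
      rw [Finset.mul_sum]
      exact Finset.sum_congr rfl fun i _ => by rw [hwdef, Pi.smul_apply, smul_eq_mul]; ring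
    rw [hexp, abs_mul, abs_of_nonneg (inv_nonneg.2 hs00)]
    rw [div_eq_inv_mul]
    exact mul_le_mul_of_nonneg_left (dstar_mem_le p hp u x' hx') (inv_nonneg.2 hs00)
  have hdd : dualDist0 p (convexHull ℝ (a '' J)) ≤ ENNReal.ofReal (P / s0) := by
    calc dualDist0 p (convexHull ℝ (a '' J)) ≤ dualDist0 p (convexHull ℝ (a '' J₀)) :=
        iInf_le_iInf_of_subset (convexHull_mono (Set.image_mono hJ₀J))
      _ ≤ dualNorm p w := iInf₂_le w hwmem
      _ ≤ ENNReal.ofReal (P / s0) := hwdual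
  refine ⟨J, ⟨hJind, hJspan⟩, ?_⟩
  have hfinal1 : pDist p x (feas a b)
      ≤ ENNReal.ofReal (s0 / P) * infEdist b {b' : Fin m → ℝ | x ∈ feas a b'} := by
    rw [hpdist]
    calc ENNReal.ofReal d ≤ ENNReal.ofReal ((s0 / P) * rmax) := by
          refine ENNReal.ofReal_le_ofReal ?_
          rw [div_mul_eq_mul_div, le_div_iff₀ hPpos]
          calc d * P ≤ s0 * rmax := hdPle
            _ = s0 * rmax := rfl
      _ = ENNReal.ofReal (s0 / P) * ENNReal.ofReal rmax :=
          ENNReal.ofReal_mul (div_nonneg hs00 hPpos.le)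
      _ ≤ ENNReal.ofReal (s0 / P) * infEdist b {b' : Fin m → ℝ | x ∈ feas a b'} :=
          mul_le_mul_right hdenom _
  refine (ENNReal.div_le_of_le_mul hfinal1).trans ?_
  have hofinv : ENNReal.ofReal (s0 / P) = (ENNReal.ofReal (P / s0))⁻¹ := by
    rw [← ENNReal.ofReal_inv_of_pos (div_pos hPpos hs0pos), inv_div]
  rw [hofinv]
  exact ENNReal.inv_le_inv.2 hdd

lemma lower_core (a : Fin m → (Fin n → ℝ)) (p : Seminorm ℝ (Fin n → ℝ))
    (hp : ∀ x, p x = 0 → x = 0) (J : Set (Fin m))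
    (hind : LinearIndependent ℝ (fun v : (a '' J) => (v : Fin n → ℝ))) :
    (dualDist0 p (convexHull ℝ (a '' J)))⁻¹
      ≤ ⨆ (b : Fin m → ℝ) (_ : (feas a b).Nonempty) (x : Fin n → ℝ),
          pDist p x (feas a b) / infEdist b {b' : Fin m → ℝ | x ∈ feas a b'} := by
  classical
  rcases Set.eq_empty_or_nonempty (a '' J) with hemp | hne
  · rw [hemp, convexHull_empty]
    have : dualDist0 p (∅ : Set (Fin n → ℝ)) = ⊤ := by
      simp [dualDist0]
    rw [this, ENNReal.inv_top]
    exact zero_le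
  · obtain ⟨v₀, t₀, ht₀J, rfl⟩ := hne
    set Bas := Module.Basis.extend hind with hBas
    set f : (Fin n → ℝ) →ₗ[ℝ] ℝ :=
      Bas.constr ℝ (fun i => if (i : Fin n → ℝ) ∈ a '' J then (1:ℝ) else 0) with hf
    have hf1 : ∀ v ∈ a '' J, f v = 1 := by
      intro v hv
      have hmem : v ∈ LinearIndepOn.extend (K := ℝ) (v := id) hind (Set.subset_univ _) :=
          LinearIndepOn.subset_extend (K := ℝ) (v := id) hind _ hv
      have : f (Bas ⟨v, hmem⟩) = if ((⟨v, hmem⟩ : LinearIndepOn.extend (K := ℝ) (v := id) hind (Set.subset_univ _)) : Fin n → ℝ) ∈ a '' J then (1:ℝ) else 0 :=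
        Module.Basis.constr_basis Bas ℝ _ _
      rw [show Bas ⟨v, hmem⟩ = v from Module.Basis.extend_apply_self hind _] at this
      rw [this]
      simp [hv]
    set z : Fin n → ℝ := fun i => f (Pi.single i 1) with hz
    have hatz : ∀ t ∈ J, ∑ i, a t i * z i = 1 := by
      intro t ht
      have h1 : f (a t) = ∑ i, a t i * f (Pi.single i 1) := lin_repr f (a t)
      have h2 : f (a t) = 1 := hf1 _ (Set.mem_image_of_mem a ht)
      rw [h2] at h1
      exact h1.symm
    set b : Fin m → ℝ := fun t => if t ∈ J then 0 else max (∑ i, a t i * z i) 0 with hb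
    have hbne : (feas a b).Nonempty := by
      refine ⟨0, fun t => ?_⟩
      have h1 : ∑ i, a t i * (0 : Fin n → ℝ) i = 0 := by simp
      rw [h1, hb]
      dsimp only
      split
      · exact le_refl 0
      · exact le_max_right _ _
    -- denominator at most 1
    set b' : Fin m → ℝ := fun t => max (b t) (∑ i, a t i * z i) with hb'
    have hzb' : z ∈ feas a b' := fun t => le_max_right _ _
    have hdist : edist b b' ≤ 1 := by
      rw [edist_pi_def]
      refine Finset.sup_le fun t _ => ?_
      rcases Classical.em (t ∈ J) with ht | ht
      · have hbt : b t = 0 := by simp [hb, ht]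
        have hb't : b' t = 1 := by
          rw [hb']; dsimp only; rw [hbt, hatz t ht]
          simp
        rw [edist_dist, Real.dist_eq, hbt, hb't]
        simp
      · have hb't : b' t = b t := by
          rw [hb']; dsimp only
          rw [hb]; dsimp only
          rw [if_neg ht]
          rw [max_comm (∑ i, a t i * z i) 0, max_assoc, max_self]
        rw [hb't, edist_self]
        exact zero_le
    have hdenle : infEdist b {b'' : Fin m → ℝ | z ∈ feas a b''} ≤ 1 :=
      le_trans (infEdist_le_edist_of_mem hzb') hdist
    -- key inequality per feasible y
    have hkey : ∀ y ∈ feas a b,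
        (dualDist0 p (convexHull ℝ (a '' J)))⁻¹ ≤ ENNReal.ofReal (p (z - y)) := by
      intro y hy
      have hwz : ∀ w ∈ convexHull ℝ (a '' J), 1 ≤ ∑ i, w i * (z - y) i := by
        have hsub : a '' J ⊆ {w : Fin n → ℝ | 1 ≤ ∑ i, w i * (z - y) i} := by
          rintro _ ⟨t, ht, rfl⟩
          have h1 : ∑ i, a t i * (z - y) i
              = (∑ i, a t i * z i) - ∑ i, a t i * y i := dot_sub _ _ _
          have h2 : ∑ i, a t i * y i ≤ 0 := by
            have h4 := hy t
            simp only [hb, ht, if_true] at h4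
            exact h4
          have h3 := hatz t ht
          show 1 ≤ ∑ i, a t i * (z - y) i
          rw [h1, h3]
          linarith
        have hconv : Convex ℝ {w : Fin n → ℝ | 1 ≤ ∑ i, w i * (z - y) i} := by
          refine convex_halfSpace_ge ?_ 1
          constructor
          · intro w1 w2
            rw [← Finset.sum_add_distrib]
            exact Finset.sum_congr rfl fun i _ => by simp [add_mul]
          · intro c w1
            simp only [Pi.smul_apply, smul_eq_mul, Finset.mul_sum]
            exact Finset.sum_congr rfl fun i _ => by ring
        exact fun w hw => convexHull_min hsub hconv hw
      have hw₀ : a t₀ ∈ convexHull ℝ (a '' J) :=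
        subset_convexHull ℝ _ (Set.mem_image_of_mem a ht₀J)
      have hpq : 0 < p (z - y) := by
        rcases eq_or_lt_of_le (apply_nonneg p (z - y)) with h0 | h
        · exfalso
          have hzy : z - y = 0 := hp _ h0.symm
          have := hwz _ hw₀
          rw [hzy] at this
          simp at this
          linarith
        · exact h
      have hdual_ge : ENNReal.ofReal (p (z - y))⁻¹ ≤ dualDist0 p (convexHull ℝ (a '' J)) := by
        refine le_iInf₂ fun w hw => ?_
        have hx' : p ((p (z - y))⁻¹ • (z - y)) ≤ 1 := by
          rw [map_smul_eq_mul, Real.norm_eq_abs, abs_of_nonneg (inv_nonneg.2 (apply_nonneg p _)),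
            inv_mul_cancel₀ hpq.ne']
        refine le_trans ?_ (ofReal_le_dualNorm p w _ hx')
        refine ENNReal.ofReal_le_ofReal ?_
        have hexp : ∑ i, w i * ((p (z - y))⁻¹ • (z - y)) i
            = (p (z - y))⁻¹ * ∑ i, w i * (z - y) i := by
          rw [Finset.mul_sum]
          exact Finset.sum_congr rfl fun i _ => by rw [Pi.smul_apply, smul_eq_mul]; ring
        rw [hexp]
        have h1 : (p (z - y))⁻¹ * 1 ≤ (p (z - y))⁻¹ * ∑ i, w i * (z - y) i :=
          mul_le_mul_of_nonneg_left (hwz w hw) (inv_nonneg.2 (apply_nonneg p _))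
        calc (p (z - y))⁻¹ = (p (z - y))⁻¹ * 1 := (mul_one _).symm
          _ ≤ (p (z - y))⁻¹ * ∑ i, w i * (z - y) i := h1
          _ ≤ |(p (z - y))⁻¹ * ∑ i, w i * (z - y) i| := le_abs_self _
      calc (dualDist0 p (convexHull ℝ (a '' J)))⁻¹
          ≤ (ENNReal.ofReal (p (z - y))⁻¹)⁻¹ := ENNReal.inv_le_inv.2 hdual_ge
        _ = ENNReal.ofReal (p (z - y)) := by
            rw [ENNReal.ofReal_inv_of_pos hpq, inv_inv]
    have hRpd : (dualDist0 p (convexHull ℝ (a '' J)))⁻¹ ≤ pDist p z (feas a b) :=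
      le_iInf₂ fun y hy => hkey y hy
    have hchain : (dualDist0 p (convexHull ℝ (a '' J)))⁻¹
        ≤ pDist p z (feas a b) / infEdist b {b'' : Fin m → ℝ | z ∈ feas a b''} := by
      calc (dualDist0 p (convexHull ℝ (a '' J)))⁻¹ ≤ pDist p z (feas a b) := hRpd
        _ = pDist p z (feas a b) / 1 := by simp
        _ ≤ pDist p z (feas a b) / infEdist b {b'' : Fin m → ℝ | z ∈ feas a b''} :=
            ENNReal.div_le_div_left hdenle _
    refine hchain.trans ?_
    exact le_iSup_of_le b (le_iSup_of_le hbne (le_iSup_of_le z le_rfl))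

end Main


/-- Theorem `TH_PVZ_const`, formula (2). For a finite system indexed by
`T = {1,…,m}` (the parameter space `ℝᵐ` carries the max norm, i.e. the product metric on
`Fin m → ℝ`; `ℝⁿ` carries an arbitrary norm `p`), the global Hoffman constant
`Hof F = sup_{b ∈ dom F, x ∈ ℝⁿ} d(x, F(b)) / d(b, F⁻¹(x))` satisfies
`Hof F = max { d_*(0ₙ, conv{a_t : t ∈ J})⁻¹ : J ⊆ T, {a_t : t ∈ J} linearly independent,
span{a_t : t ∈ J} = span{a_t : t ∈ T} }`
(conventions: `d(z,∅) = +∞`, `1/+∞ = 0`, `0/0 = 0`, `sup ∅ = 0`). -/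
theorem global_hoffman_constant_finite_rank
    {n m : ℕ} (a : Fin m → (Fin n → ℝ))
    (p : Seminorm ℝ (Fin n → ℝ)) (hp : ∀ x, p x = 0 → x = 0) :
    (⨆ (b : Fin m → ℝ) (_ : (feas a b).Nonempty) (x : Fin n → ℝ),
        pDist p x (feas a b) / infEdist b {b' : Fin m → ℝ | x ∈ feas a b'})
    =
    ⨆ (J : Set (Fin m))
      (_ : LinearIndependent ℝ (fun v : (a '' J) => (v : Fin n → ℝ)) ∧
           Submodule.span ℝ (a '' J) = Submodule.span ℝ (Set.range a)),
      (dualDist0 p (convexHull ℝ (a '' J)))⁻¹ := by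
  apply le_antisymm
  · refine iSup_le fun b => iSup_le fun hbne => iSup_le fun x => ?_
    by_cases hx : x ∈ feas a b
    · have h0 : pDist p x (feas a b) = 0 := by
        refine le_antisymm ?_ zero_le
        have h1 : pDist p x (feas a b) ≤ ENNReal.ofReal (p (x - x)) :=
          show (⨅ s ∈ feas a b, ENNReal.ofReal (p (x - s))) ≤ _ from iInf₂_le x hx
        simpa using h1
      rw [h0, ENNReal.zero_div]
      exact zero_le
    · obtain ⟨J, hJ, hle⟩ := upper_core a p hp b hbne x hx
      refine hle.trans ?_
      exact le_iSup_of_le J (le_iSup_of_le hJ le_rfl)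
  · refine iSup_le fun J => iSup_le fun hJ => ?_
    exact lower_core a p hp J hJ.1
end

section
/- Let M be a multifunction between metric spaces Y and X, ȳ ∈ dom M, and κ > 0. Then the following are equivalent: (i) there exist a neighborhood V of ȳ and ε > 0 such that d(x,M(ȳ)) ≤ κ·d(y,ȳ) for every y ∈ V and every x ∈ M(y) with d(x,M(ȳ)) ≤ ε; (ii) there exists ε > 0 such that d(x,M(ȳ)) ≤ κ·d(ȳ,M⁻¹(x)) for every x ∈ X with d(x,M(ȳ)) ≤ ε. -/
open Filter Set EMetric
open scoped Topology ENNReal NNReal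

/-- Proposition `Prop eqiv k>0`.
For a multifunction `M` between metric spaces, `ȳ ∈ dom M` and `κ > 0`, the following are
equivalent:
(i) there exist a neighborhood `V` of `ȳ` and `ε > 0` such that
    `d(x, M(ȳ)) ≤ κ·d(y, ȳ)` for every `y ∈ V` and every `x ∈ M(y)` with `d(x, M(ȳ)) ≤ ε`;
(ii) there exists `ε > 0` such that `d(x, M(ȳ)) ≤ κ·d(ȳ, M⁻¹(x))` for every `x ∈ X` with
    `d(x, M(ȳ)) ≤ ε`.
Distances to sets are taken in `[0, +∞]` (so `d(z, ∅) = +∞`). -/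
theorem uniform_calmness_iff_metric_form
    {Y X : Type*} [MetricSpace Y] [MetricSpace X]
    (M : Y → Set X) (ybar : Y) (hdom : (M ybar).Nonempty)
    (κ : ℝ) (hκ : 0 < κ) :
    (∃ V ∈ 𝓝 ybar, ∃ ε : ℝ, 0 < ε ∧ ∀ y ∈ V, ∀ x ∈ M y,
        infEdist x (M ybar) ≤ ENNReal.ofReal ε →
        infEdist x (M ybar) ≤ ENNReal.ofReal κ * edist y ybar) ↔
    (∃ ε : ℝ, 0 < ε ∧ ∀ x : X,
        infEdist x (M ybar) ≤ ENNReal.ofReal ε →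
        infEdist x (M ybar) ≤ ENNReal.ofReal κ * infEdist ybar {y : Y | x ∈ M y}) := by
  have hκ0 : ENNReal.ofReal κ ≠ 0 := by simp [hκ, ENNReal.ofReal_pos.2 hκ |>.ne']
  have hκtop : ENNReal.ofReal κ ≠ ⊤ := ENNReal.ofReal_ne_top
  constructor
  · rintro ⟨V, hV, ε, hε, H⟩
    obtain ⟨δ, hδ, hball⟩ := Metric.mem_nhds_iff.1 hV
    refine ⟨min ε (κ * δ), lt_min hε (by positivity), fun x hx => ?_⟩
    set a := infEdist x (M ybar) with ha
    have hatop : a ≠ ⊤ := hx.trans_lt ENNReal.ofReal_lt_top |>.ne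
    have key : ∀ y ∈ {y : Y | x ∈ M y}, a ≤ ENNReal.ofReal κ * edist ybar y := by
      intro y hy
      by_cases hyV : y ∈ Metric.ball ybar δ
      · have := H y (hball hyV) x hy
          (hx.trans (ENNReal.ofReal_le_ofReal (min_le_left _ _)))
        rwa [edist_comm y ybar] at this
      · have hd : ENNReal.ofReal δ ≤ edist ybar y := by
          rw [edist_dist, dist_comm]
          exact ENNReal.ofReal_le_ofReal (le_of_not_gt hyV)
        calc a ≤ ENNReal.ofReal (min ε (κ * δ)) := hx
          _ ≤ ENNReal.ofReal (κ * δ) := ENNReal.ofReal_le_ofReal (min_le_right _ _)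
          _ = ENNReal.ofReal κ * ENNReal.ofReal δ := ENNReal.ofReal_mul hκ.le
          _ ≤ ENNReal.ofReal κ * edist ybar y := mul_le_mul_right hd _
    have h2 : a / ENNReal.ofReal κ ≤ infEdist ybar {y : Y | x ∈ M y} := by
      refine le_infEdist.2 fun y hy => ?_
      rw [ENNReal.div_le_iff_le_mul (Or.inl hκ0) (Or.inl hκtop)]
      calc a ≤ ENNReal.ofReal κ * edist ybar y := key y hy
        _ = edist ybar y * ENNReal.ofReal κ := mul_comm _ _
    calc a = ENNReal.ofReal κ * (a / ENNReal.ofReal κ) :=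
          (ENNReal.mul_div_cancel hκ0 hκtop).symm
      _ ≤ _ := mul_le_mul_right h2 _
  · rintro ⟨ε, hε, H⟩
    refine ⟨univ, univ_mem, ε, hε, fun y _ x hx h => ?_⟩
    refine (H x h).trans (mul_le_mul_right ?_ _)
    rw [edist_comm y ybar]
    exact infEdist_le_edist_of_mem hx
end

section
/- Let M be a multifunction between metric spaces Y and X and ȳ ∈ dom M. Then: (i) M is uniformly calm at ȳ if and only if there exist ε > 0 and κ ≥ 0 such that d(x,M(ȳ)) ≤ κ·d(ȳ,M⁻¹(x)) for all x ∈ X with d(x,M(ȳ)) ≤ ε; (ii) the uniform calmness modulus satisfies uclm M(ȳ) = inf{κ ≥ 0 : ∃ ε > 0 such that d(x,M(ȳ)) ≤ κ·d(ȳ,M⁻¹(x)) for all x ∈ X with d(x,M(ȳ)) ≤ ε}. -/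
open Filter Set EMetric
open scoped Topology ENNReal NNReal


section Aux
variable {Y X : Type*} [MetricSpace Y] [MetricSpace X] (M : Y → Set X) (ybar : Y)

def Pprop (κ : ℝ≥0) : Prop := ∃ V ∈ 𝓝 ybar, ∃ ε : ℝ, 0 < ε ∧ ∀ y ∈ V, ∀ x ∈ M y,
    infEdist x (M ybar) ≤ ENNReal.ofReal ε →
    infEdist x (M ybar) ≤ (κ : ℝ≥0∞) * edist y ybar

def Qprop (κ : ℝ≥0) : Prop := ∃ ε : ℝ, 0 < ε ∧ ∀ x : X,
    infEdist x (M ybar) ≤ ENNReal.ofReal ε →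
    infEdist x (M ybar) ≤ (κ : ℝ≥0∞) * infEdist ybar {y : Y | x ∈ M y}

variable {M ybar}

lemma P_mono {κ κ' : ℝ≥0} (h : κ ≤ κ') (hP : Pprop M ybar κ) : Pprop M ybar κ' := by
  obtain ⟨V, hV, ε, hε, H⟩ := hP
  exact ⟨V, hV, ε, hε, fun y hy x hx hle =>
    (H y hy x hx hle).trans (mul_le_mul_left (ENNReal.coe_le_coe.2 h) _)⟩

lemma Q_to_P {κ : ℝ≥0} (hQ : Qprop M ybar κ) : Pprop M ybar κ := by
  obtain ⟨ε, hε, H⟩ := hQ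
  refine ⟨univ, univ_mem, ε, hε, fun y _ x hx hle => ?_⟩
  refine (H x hle).trans (mul_le_mul_right ?_ _)
  calc infEdist ybar {y' : Y | x ∈ M y'} ≤ edist ybar y := infEdist_le_edist_of_mem hx
  _ = edist y ybar := edist_comm _ _

lemma P_to_Q {κ : ℝ≥0} (hκ : κ ≠ 0) (hP : Pprop M ybar κ) : Qprop M ybar κ := by
  obtain ⟨V, hV, ε, hε, H⟩ := hP
  obtain ⟨δ, hδ, hball⟩ := Metric.mem_nhds_iff.1 hV
  have hκR : (0:ℝ) < κ := hκ.bot_lt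
  refine ⟨min ε ((κ:ℝ) * δ / 2), lt_min hε (by positivity), fun x hle => ?_⟩
  have hleε : infEdist x (M ybar) ≤ ENNReal.ofReal ε :=
    hle.trans (ENNReal.ofReal_le_ofReal (min_le_left _ _))
  have hfin : infEdist x (M ybar) ≠ ∞ := (hleε.trans_lt ENNReal.ofReal_lt_top).ne
  have key : ∀ y ∈ {y : Y | x ∈ M y},
      infEdist x (M ybar) ≤ (κ : ℝ≥0∞) * edist y ybar := by
    intro y hy
    by_cases hyV : y ∈ V
    · exact H y hyV x hy hleε
    · have hdist : δ ≤ dist y ybar := by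
        by_contra hcon
        exact hyV (hball (Metric.mem_ball.2 (lt_of_not_ge hcon)))
      calc infEdist x (M ybar) ≤ ENNReal.ofReal ((κ:ℝ) * δ / 2) :=
            hle.trans (ENNReal.ofReal_le_ofReal (min_le_right _ _))
      _ ≤ ENNReal.ofReal ((κ:ℝ) * δ) := ENNReal.ofReal_le_ofReal (by nlinarith)
      _ = (κ : ℝ≥0∞) * ENNReal.ofReal δ := by
            rw [ENNReal.ofReal_mul hκR.le, ENNReal.ofReal_coe_nnreal]
      _ ≤ (κ : ℝ≥0∞) * edist y ybar := by
            refine mul_le_mul_right ?_ _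
            rw [edist_dist]
            exact ENNReal.ofReal_le_ofReal hdist
  have hdiv : infEdist x (M ybar) / κ ≤ infEdist ybar {y : Y | x ∈ M y} := by
    refine le_infEdist.2 fun y hy => ?_
    rw [ENNReal.div_le_iff_le_mul (Or.inl (by exact_mod_cast hκ)) (Or.inl ENNReal.coe_ne_top),
      mul_comm, edist_comm]
    exact key y hy
  calc infEdist x (M ybar) = (κ : ℝ≥0∞) * (infEdist x (M ybar) / κ) :=
        (ENNReal.mul_div_cancel (by exact_mod_cast hκ) ENNReal.coe_ne_top).symm
  _ ≤ (κ : ℝ≥0∞) * infEdist ybar {y : Y | x ∈ M y} := mul_le_mul_right hdiv _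

end Aux

/-- The uniform calmness modulus `uclm M(ȳ)`: the infimum of all constants `κ ≥ 0` for which
there exist a neighborhood `V` of `ȳ` and `ε > 0` such that `d(x, M(ȳ)) ≤ κ·d(y, ȳ)` for all
`y ∈ V` and all `x ∈ M(y)` with `d(x, M(ȳ)) ≤ ε`  (with `inf ∅ = +∞`). -/
noncomputable def uclm {Y X : Type*} [MetricSpace Y] [MetricSpace X]
    (M : Y → Set X) (ybar : Y) : ℝ≥0∞ :=
  ⨅ (κ : ℝ≥0) (_ : ∃ V ∈ 𝓝 ybar, ∃ ε : ℝ, 0 < ε ∧ ∀ y ∈ V, ∀ x ∈ M y,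
      infEdist x (M ybar) ≤ ENNReal.ofReal ε →
      infEdist x (M ybar) ≤ (κ : ℝ≥0∞) * edist y ybar), (κ : ℝ≥0∞)

/-- Corollary `Cor_unif_calm`. Let `M` be a multifunction between metric
spaces and `ȳ ∈ dom M`. Then:
(i) `M` is uniformly calm at `ȳ` iff there exist `ε > 0` and `κ ≥ 0` such that
    `d(x, M(ȳ)) ≤ κ·d(ȳ, M⁻¹(x))` for all `x` with `d(x, M(ȳ)) ≤ ε`;
(ii) `uclm M(ȳ)` equals the infimum of all `κ ≥ 0` such that the inequality in (i) holds for
     some `ε > 0`. -/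
theorem uclm_eq_inf_metric_form
    {Y X : Type*} [MetricSpace Y] [MetricSpace X]
    (M : Y → Set X) (ybar : Y) (hdom : (M ybar).Nonempty) :
    ((∃ κ : ℝ≥0, ∃ V ∈ 𝓝 ybar, ∃ ε : ℝ, 0 < ε ∧ ∀ y ∈ V, ∀ x ∈ M y,
        infEdist x (M ybar) ≤ ENNReal.ofReal ε →
        infEdist x (M ybar) ≤ (κ : ℝ≥0∞) * edist y ybar) ↔
      (∃ ε : ℝ, 0 < ε ∧ ∃ κ : ℝ≥0, ∀ x : X,
        infEdist x (M ybar) ≤ ENNReal.ofReal ε →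
        infEdist x (M ybar) ≤ (κ : ℝ≥0∞) * infEdist ybar {y : Y | x ∈ M y}))
    ∧
    uclm M ybar =
      ⨅ (κ : ℝ≥0) (_ : ∃ ε : ℝ, 0 < ε ∧ ∀ x : X,
          infEdist x (M ybar) ≤ ENNReal.ofReal ε →
          infEdist x (M ybar) ≤ (κ : ℝ≥0∞) * infEdist ybar {y : Y | x ∈ M y}),
        (κ : ℝ≥0∞) := by
  constructor
  · constructor
    · rintro ⟨κ, hP⟩
      have hQ : Qprop M ybar (κ + 1) :=
        P_to_Q (by simp) (P_mono (le_add_of_nonneg_right zero_le_one) hP)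
      obtain ⟨ε, hε, H⟩ := hQ
      exact ⟨ε, hε, κ + 1, H⟩
    · rintro ⟨ε, hε, κ, H⟩
      exact ⟨κ, Q_to_P ⟨ε, hε, H⟩⟩
  · rw [uclm]
    refine le_antisymm (le_iInf₂ fun κ hQ => iInf₂_le κ (Q_to_P hQ))
      (le_iInf₂ fun κ hP => ?_)
    refine ENNReal.le_of_forall_pos_le_add fun δ hδ _ => ?_
    have hQ : Qprop M ybar (κ + δ) :=
      P_to_Q (by positivity) (P_mono (le_add_of_nonneg_right hδ.le) hP)
    calc (⨅ (κ' : ℝ≥0) (_ : Qprop M ybar κ'), (κ' : ℝ≥0∞)) ≤ ((κ + δ : ℝ≥0) : ℝ≥0∞) :=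
          iInf₂_le (κ + δ) hQ
    _ = (κ : ℝ≥0∞) + δ := by push_cast; rfl
end

section
/- Let M be a multifunction between metric spaces Y and X and ȳ ∈ dom M. Then uclm M(ȳ) = inf_{ε>0} ( sup { d(x,M(ȳ))/d(ȳ,M⁻¹(x)) : x ∈ X, d(x,M(ȳ)) ≤ ε } ), i.e. the uniform calmness modulus equals the limsup of d(x,M(ȳ))/d(ȳ,M⁻¹(x)) as d(x,M(ȳ)) → 0. -/
open Filter Set EMetric
open scoped Topology ENNReal NNReal

/-- part (ii) of the proposition on upper-limit characterizations.
For a multifunction `M` between metric spaces and `ȳ ∈ dom M`,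
`uclm M(ȳ) = inf_{ε > 0} sup { d(x, M(ȳ)) / d(ȳ, M⁻¹(x)) : x ∈ X, d(x, M(ȳ)) ≤ ε }`,
i.e. the uniform calmness modulus is the limsup of `d(x, M(ȳ)) / d(ȳ, M⁻¹(x))` as
`d(x, M(ȳ)) → 0`  (distances to sets in `[0, +∞]`, `d(z, ∅) = +∞`, `0/0 = 0`, `sup ∅ = 0`). -/
theorem uclm_eq_limsup
    {Y X : Type*} [MetricSpace Y] [MetricSpace X]
    (M : Y → Set X) (ybar : Y) (hdom : (M ybar).Nonempty) :
    uclm M ybar =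
      ⨅ (ε : ℝ) (_ : 0 < ε),
        ⨆ (x : X) (_ : infEdist x (M ybar) ≤ ENNReal.ofReal ε),
          infEdist x (M ybar) / infEdist ybar {y : Y | x ∈ M y} := by
  unfold uclm
  apply le_antisymm
  · -- uclm ≤ RHS
    by_contra h
    push_neg at h
    obtain ⟨κ, hκ1, hκ2⟩ := ENNReal.lt_iff_exists_nnreal_btwn.mp h
    rw [iInf_lt_iff] at hκ1
    obtain ⟨ε, hε⟩ := hκ1
    rw [iInf_lt_iff] at hε
    obtain ⟨hε0, hsup⟩ := hε
    have hP : ∃ V ∈ 𝓝 ybar, ∃ ε' : ℝ, 0 < ε' ∧ ∀ y ∈ V, ∀ x ∈ M y,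
        infEdist x (M ybar) ≤ ENNReal.ofReal ε' →
        infEdist x (M ybar) ≤ (κ : ℝ≥0∞) * edist y ybar := by
      refine ⟨Set.univ, Filter.univ_mem, ε, hε0, fun y _ x hx hxa => ?_⟩
      have hb : infEdist ybar {y : Y | x ∈ M y} ≤ edist y ybar := by
        rw [edist_comm]
        exact infEdist_le_edist_of_mem hx
      have hdiv : infEdist x (M ybar) / infEdist ybar {y : Y | x ∈ M y} < κ :=
        lt_of_le_of_lt
          (le_iSup₂ (f := fun (x : X) (_ : infEdist x (M ybar) ≤ ENNReal.ofReal ε) =>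
            infEdist x (M ybar) / infEdist ybar {y : Y | x ∈ M y}) x hxa) hsup
      rcases eq_or_ne (infEdist ybar {y : Y | x ∈ M y}) 0 with hb0 | hb0
      · rcases eq_or_ne (infEdist x (M ybar)) 0 with ha0 | ha0
        · simp [ha0]
        · rw [hb0, ENNReal.div_zero ha0] at hdiv
          exact absurd hdiv (by simp)
      · have hbt : infEdist ybar {y : Y | x ∈ M y} ≠ ∞ :=
          ne_top_of_le_ne_top (edist_ne_top y ybar) hb
        rw [ENNReal.div_lt_iff (Or.inl hb0) (Or.inl hbt)] at hdiv
        exact le_trans hdiv.le (mul_le_mul_right hb _)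
    exact lt_irrefl _ (hκ2.trans_le (iInf₂_le κ hP))
  · -- RHS ≤ uclm
    refine le_iInf₂ fun κ hκ => ?_
    obtain ⟨V, hV, ε, hε0, hprop⟩ := hκ
    obtain ⟨δ, hδ0, hball⟩ := Metric.mem_nhds_iff.mp hV
    refine ENNReal.le_of_forall_pos_le_add fun η hη _ => ?_
    have hε'0 : 0 < min ε (δ * η) := lt_min hε0 (mul_pos hδ0 hη)
    refine le_trans (iInf₂_le (min ε (δ * η)) hε'0) (iSup₂_le fun x hx => ?_)
    set a := infEdist x (M ybar) with ha
    set b := infEdist ybar {y : Y | x ∈ M y} with hb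
    by_cases hbδ : ENNReal.ofReal δ ≤ b
    · have h1 : a / b ≤ ENNReal.ofReal (min ε (δ * η)) / ENNReal.ofReal δ :=
        ENNReal.div_le_div hx hbδ
      have h2 : ENNReal.ofReal (min ε (δ * η)) / ENNReal.ofReal δ ≤
          ENNReal.ofReal (δ * η) / ENNReal.ofReal δ :=
        ENNReal.div_le_div (ENNReal.ofReal_le_ofReal (min_le_right _ _)) le_rfl
      have h3 : ENNReal.ofReal (δ * η) / ENNReal.ofReal δ = (η : ℝ≥0∞) := by
        rw [ENNReal.ofReal_mul hδ0.le, mul_comm,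
          mul_div_assoc, ENNReal.div_self (by positivity) ENNReal.ofReal_ne_top,
          mul_one, ENNReal.ofReal_coe_nnreal]
      calc a / b ≤ (η : ℝ≥0∞) := by rw [← h3]; exact h1.trans h2
        _ ≤ κ + η := le_add_self
    · push_neg at hbδ
      have hbt : b ≠ ∞ := ne_top_of_lt hbδ
      have key : ∀ c, b < c → a ≤ κ * c := by
        intro c hc
        have hc' : b < min c (ENNReal.ofReal δ) := lt_min hc hbδ
        obtain ⟨y, hyM, hyd⟩ := infEdist_lt_iff.mp hc'
        have hyV : y ∈ V := hball (by
          have h5 : edist ybar y < ENNReal.ofReal δ := hyd.trans_le (min_le_right _ _)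
          rw [Metric.mem_ball, dist_comm]
          exact edist_lt_ofReal.mp h5)
        have h := hprop y hyV x hyM (hx.trans (ENNReal.ofReal_le_ofReal (min_le_left _ _)))
        have h6 : edist y ybar ≤ c := by
          rw [edist_comm]; exact le_of_lt (hyd.trans_le (min_le_left _ _))
        exact h.trans (mul_le_mul_right h6 _)
      have hab : a ≤ (κ : ℝ≥0∞) * b := by
        rcases eq_or_ne (κ : ℝ≥0∞) 0 with hκ0 | hκ0
        · have h7 := key (b + 1) (ENNReal.lt_add_right hbt one_ne_zero)
          simpa [hκ0] using h7
        · refine ENNReal.le_of_forall_pos_le_add fun e he _ => ?_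
          have hc : b < b + (e : ℝ≥0∞) / κ := ENNReal.lt_add_right hbt
            (by simp [ENNReal.div_eq_zero_iff, he.ne', ENNReal.coe_ne_top])
          have h8 := key _ hc
          rwa [mul_add, ENNReal.mul_div_cancel hκ0 ENNReal.coe_ne_top] at h8
      rcases eq_or_ne b 0 with hb0 | hb0
      · have ha0 : a = 0 := le_antisymm (by simpa [hb0] using hab) bot_le
        simp [ha0]
      · have h9 : a / b ≤ (κ : ℝ≥0∞) := (ENNReal.div_le_iff hb0 hbt).mpr hab
        exact h9.trans le_self_add
end

section
/- Let M be a multifunction between metric spaces Y and X and ȳ ∈ dom M. Then sup_{x ∈ M(ȳ)} clm M(ȳ,x) ≤ uclm M(ȳ) ≤ Lipusc M(ȳ) ≤ Hof M(ȳ). -/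
open Filter Set EMetric
open scoped Topology ENNReal NNReal

/-- The calmness modulus `clm M(ȳ, x̄)`:
`limsup_{(y,x) → (ȳ,x̄), (y,x) ∈ gph M} d(x, M(ȳ)) / d(y, ȳ)` in `[0, +∞]`. -/
noncomputable def clm {Y X : Type*} [MetricSpace Y] [MetricSpace X]
    (M : Y → Set X) (ybar : Y) (xbar : X) : ℝ≥0∞ :=
  Filter.limsup (fun q : Y × X => infEdist q.2 (M ybar) / edist q.1 ybar)
    (𝓝 (ybar, xbar) ⊓ 𝓟 {q : Y × X | q.2 ∈ M q.1})

/-- The Lipschitz upper semicontinuity modulus `Lipusc M(ȳ)`. -/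
noncomputable def lipusc {Y X : Type*} [MetricSpace Y] [MetricSpace X]
    (M : Y → Set X) (ybar : Y) : ℝ≥0∞ :=
  ⨅ (κ : ℝ≥0) (_ : ∃ V ∈ 𝓝 ybar, ∀ y ∈ V, ∀ x ∈ M y,
      infEdist x (M ybar) ≤ (κ : ℝ≥0∞) * edist y ybar), (κ : ℝ≥0∞)

/-- The Hoffman modulus `Hof M(ȳ) = sup_{(y,x) ∈ gph M} d(x, M(ȳ)) / d(y, ȳ)`. -/
noncomputable def hofMod {Y X : Type*} [MetricSpace Y] [MetricSpace X]
    (M : Y → Set X) (ybar : Y) : ℝ≥0∞ :=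
  ⨆ (y : Y) (x : X) (_ : x ∈ M y), infEdist x (M ybar) / edist y ybar

/-- Corollary `Cor three inequalities`.
For a multifunction `M` between metric spaces and `ȳ ∈ dom M`,
`sup_{x ∈ M(ȳ)} clm M(ȳ,x) ≤ uclm M(ȳ) ≤ Lipusc M(ȳ) ≤ Hof M(ȳ)`. -/
theorem clm_le_uclm_le_lipusc_le_hof
    {Y X : Type*} [MetricSpace Y] [MetricSpace X]
    (M : Y → Set X) (ybar : Y) (hdom : (M ybar).Nonempty) :
    (⨆ x ∈ M ybar, clm M ybar x) ≤ uclm M ybar ∧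
    uclm M ybar ≤ lipusc M ybar ∧
    lipusc M ybar ≤ hofMod M ybar := by
  refine ⟨?_, ?_, ?_⟩
  · refine iSup₂_le fun xbar hx => le_iInf₂ fun κ hκ => ?_
    obtain ⟨V, hV, ε, hε, hP⟩ := hκ
    refine Filter.limsup_le_of_le (by isBoundedDefault) ?_
    have h1 : ∀ᶠ q : Y × X in 𝓝 (ybar, xbar), q.1 ∈ V :=
      continuous_fst.continuousAt.eventually_mem hV
    have hc : ContinuousAt (fun q : Y × X => infEdist q.2 (M ybar)) (ybar, xbar) :=
      (continuous_infEdist.comp continuous_snd).continuousAt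
    have h2 : ∀ᶠ q : Y × X in 𝓝 (ybar, xbar),
        infEdist q.2 (M ybar) < ENNReal.ofReal ε := by
      have h0 : infEdist xbar (M ybar) = 0 := infEdist_zero_of_mem hx
      have := hc.tendsto
      rw [h0] at this
      exact this.eventually_lt_const (by simp [hε])
    rw [Filter.eventually_inf_principal]
    filter_upwards [h1, h2] with q hq1 hq2 hqS
    have key : infEdist q.2 (M ybar) ≤ (κ : ℝ≥0∞) * edist q.1 ybar :=
      hP q.1 hq1 q.2 hqS hq2.le
    rcases eq_or_ne (edist q.1 ybar) 0 with h0 | h0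
    · have hy : q.1 = ybar := edist_eq_zero.mp h0
      have : infEdist q.2 (M ybar) = 0 := infEdist_zero_of_mem (hy ▸ hqS)
      simp [this]
    · exact (ENNReal.div_le_iff h0 (edist_ne_top _ _)).mpr key
  · refine le_iInf₂ fun κ hκ => iInf₂_le κ ?_
    obtain ⟨V, hV, h⟩ := hκ
    exact ⟨V, hV, 1, one_pos, fun y hy x hx _ => h y hy x hx⟩
  · rcases eq_or_ne (hofMod M ybar) ∞ with htop | htop
    · simp [htop]
    · refine iInf₂_le_of_le (hofMod M ybar).toNNReal ?_ ?_
      · refine ⟨univ, univ_mem, fun y _ x hx => ?_⟩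
        have hle : infEdist x (M ybar) / edist y ybar ≤ hofMod M ybar :=
          le_iSup₂_of_le y x (le_iSup_of_le hx le_rfl)
        rw [ENNReal.coe_toNNReal htop]
        rcases eq_or_ne (edist y ybar) 0 with h0 | h0
        · have hy : y = ybar := edist_eq_zero.mp h0
          have : infEdist x (M ybar) = 0 := infEdist_zero_of_mem (hy ▸ hx)
          simp [this]
        · exact (ENNReal.div_le_iff h0 (edist_ne_top _ _)).mp hle
      · exact ENNReal.coe_toNNReal_le_self
end

section
/- Let M : Y → Set X be a multifunction with Y a normed space and X a normed space, and assume gph M is a nonempty convex set. Let ȳ ∈ dom M with M(ȳ) closed. Consider any (y,x) ∈ gph M and let x̄ ∈ M(ȳ) be a best approximation of x in M(ȳ), i.e. ‖x − x̄‖ = d(x,M(ȳ)). Then d(x,M(ȳ))/‖y − ȳ‖ ≤ clm M(ȳ,x̄). -/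
open Filter Set EMetric Metric
open scoped Topology ENNReal NNReal

/-- Lemma `lem 2`. Let `M : Y ⇉ X` be a multifunction between real normed
spaces with nonempty convex graph, `ȳ ∈ dom M` with `M(ȳ)` closed. For any `(y, x) ∈ gph M`,
if `x̄ ∈ M(ȳ)` is a best approximation of `x` in `M(ȳ)`, then
`d(x, M(ȳ)) / ‖y − ȳ‖ ≤ clm M(ȳ, x̄)`  (quotient in `[0, +∞]`, with `0/0 = 0`). -/
theorem ratio_le_clm_of_convex_graph
    {Y X : Type*} [NormedAddCommGroup Y] [NormedSpace ℝ Y]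
    [NormedAddCommGroup X] [NormedSpace ℝ X]
    (M : Y → Set X)
    (hgne : {q : Y × X | q.2 ∈ M q.1}.Nonempty)
    (hgconv : Convex ℝ {q : Y × X | q.2 ∈ M q.1})
    (ybar : Y) (hdom : (M ybar).Nonempty) (hcl : IsClosed (M ybar))
    (y : Y) (x : X) (hyx : x ∈ M y)
    (xbar : X) (hxbar : xbar ∈ M ybar)
    (hba : ‖x - xbar‖ = infDist x (M ybar)) :
    infEdist x (M ybar) / edist y ybar ≤ clm M ybar xbar := by
  rcases eq_or_ne y ybar with rfl | hy
  · have h0 : infEdist x (M y) = 0 := infEdist_zero_of_mem hyx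
    simp [h0]
  rcases eq_or_ne x xbar with rfl | hx
  · have h0 : infEdist x (M ybar) = 0 := infEdist_zero_of_mem hxbar
    simp [h0]
  -- main case
  have ha : 0 < ‖x - xbar‖ := by simpa [sub_eq_zero] using hx
  have hb : 0 < ‖y - ybar‖ := by simpa [sub_eq_zero] using hy
  -- infEdist x (M ybar) = ofReal ‖x - xbar‖
  have hiE : infEdist x (M ybar) = ENNReal.ofReal ‖x - xbar‖ := by
    rw [hba, infDist, ENNReal.ofReal_toReal (infEdist_ne_top hdom)]; rfl
  have hed : edist y ybar = ENNReal.ofReal ‖y - ybar‖ := by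
    rw [edist_dist, dist_eq_norm]
  -- the segment map
  set g : ℝ → Y × X := fun t => (ybar + t • (y - ybar), xbar + t • (x - xbar)) with hg
  have hmem : ∀ t ∈ Ioc (0:ℝ) 1, g t ∈ {q : Y × X | q.2 ∈ M q.1} := by
    intro t ht
    have := hgconv (x := (ybar, xbar)) (y := (y, x)) hxbar hyx
      (a := 1 - t) (b := t) (by linarith [ht.2]) (le_of_lt ht.1) (by ring)
    have hgt : g t = (1 - t) • ((ybar, xbar) : Y × X) + t • (y, x) := by
      simp [hg, Prod.ext_iff, Prod.smul_fst, Prod.smul_snd, smul_sub, sub_smul, one_smul]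
      constructor <;> abel
    rw [hgt]; exact this
  -- distances along the segment
  have hinfD : ∀ t ∈ Ioc (0:ℝ) 1, infDist (xbar + t • (x - xbar)) (M ybar) = t * ‖x - xbar‖ := by
    intro t ht
    apply le_antisymm
    · have := infDist_le_dist_of_mem (x := xbar + t • (x - xbar)) hxbar
      calc infDist (xbar + t • (x - xbar)) (M ybar) ≤ dist (xbar + t • (x - xbar)) xbar := this
        _ = t * ‖x - xbar‖ := by
            rw [dist_eq_norm]
            simp [norm_smul, abs_of_pos ht.1]
    · rw [infDist_eq_iInf]
      have : Nonempty (M ybar) := hdom.to_subtype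
      refine le_ciInf fun z => ?_
      have h1 : dist x (z : X) ≥ ‖x - xbar‖ := by
        rw [hba]; exact infDist_le_dist_of_mem z.2
      have h2 : dist x (xbar + t • (x - xbar)) = (1 - t) * ‖x - xbar‖ := by
        rw [dist_eq_norm]
        have : x - (xbar + t • (x - xbar)) = (1 - t) • (x - xbar) := by
          rw [sub_smul, one_smul]; abel
        rw [this, norm_smul, Real.norm_eq_abs, abs_of_nonneg (by linarith [ht.2])]
      have h3 := dist_triangle x (xbar + t • (x - xbar)) (z : X)
      nlinarith [dist_nonneg (x := x) (y := (z : X))]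
  -- value of the quotient along the segment
  set f : Y × X → ℝ≥0∞ := fun q => infEdist q.2 (M ybar) / edist q.1 ybar with hf
  have hval : ∀ t ∈ Ioc (0:ℝ) 1,
      f (g t) = ENNReal.ofReal ‖x - xbar‖ / ENNReal.ofReal ‖y - ybar‖ := by
    intro t ht
    have hnum : infEdist (xbar + t • (x - xbar)) (M ybar) = ENNReal.ofReal (t * ‖x - xbar‖) := by
      rw [← hinfD t ht, infDist, ENNReal.ofReal_toReal (infEdist_ne_top hdom)]; rfl
    have hden : edist (ybar + t • (y - ybar)) ybar = ENNReal.ofReal (t * ‖y - ybar‖) := by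
      rw [edist_dist, dist_eq_norm]
      simp [norm_smul, abs_of_pos ht.1]
    simp only [hf, hg, hnum, hden]
    rw [ENNReal.ofReal_mul (le_of_lt ht.1), ENNReal.ofReal_mul (le_of_lt ht.1),
      ENNReal.mul_div_mul_left _ _ (by simp [ENNReal.ofReal_eq_zero]; exact ht.1)
        ENNReal.ofReal_ne_top]
  -- tendsto
  have hg0 : g 0 = (ybar, xbar) := by simp [hg]
  have hcont : Continuous g := by fun_prop
  have hT1 : Tendsto g (𝓝[Ioc (0:ℝ) 1] 0) (𝓝 (ybar, xbar)) := by
    rw [← hg0]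
    exact (hcont.tendsto 0).mono_left nhdsWithin_le_nhds
  have hT2 : Tendsto g (𝓝[Ioc (0:ℝ) 1] 0) (𝓟 {q : Y × X | q.2 ∈ M q.1}) := by
    rw [tendsto_principal]
    exact eventually_mem_nhdsWithin.mono hmem
  have hT : Tendsto g (𝓝[Ioc (0:ℝ) 1] 0)
      (𝓝 (ybar, xbar) ⊓ 𝓟 {q : Y × X | q.2 ∈ M q.1}) := tendsto_inf.2 ⟨hT1, hT2⟩
  have hne : (𝓝[Ioc (0:ℝ) 1] 0).NeBot := left_nhdsWithin_Ioc_neBot one_pos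
  rw [hiE, hed]
  refine le_limsup_of_frequently_le' ?_
  have hfreq : ∃ᶠ t in 𝓝[Ioc (0:ℝ) 1] 0,
      ENNReal.ofReal ‖x - xbar‖ / ENNReal.ofReal ‖y - ybar‖ ≤ f (g t) :=
    (eventually_mem_nhdsWithin.mono fun t ht => (hval t ht).ge).frequently
  have hfreq2 : ∃ᶠ q in Filter.map g (𝓝[Ioc (0:ℝ) 1] 0),
      ENNReal.ofReal ‖x - xbar‖ / ENNReal.ofReal ‖y - ybar‖ ≤ f q :=
    Filter.frequently_map.2 hfreq
  exact hfreq2.filter_mono hT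
end

section
/- Let M : Y → Set X be a multifunction with Y a normed space and X a Banach space, and assume gph M is a nonempty convex set. Let ȳ ∈ dom M, assume M(ȳ) is closed, and assume every point of X admits a best approximation in M(ȳ) (i.e. for every x ∈ X there is x̄ ∈ M(ȳ) with ‖x − x̄‖ = d(x,M(ȳ))), as holds in particular when X is a reflexive Banach space. Then sup_{x ∈ M(ȳ)} clm M(ȳ,x) = uclm M(ȳ) = Lipusc M(ȳ) = Hof M(ȳ). -/
open Filter Set EMetric Metric
open scoped Topology ENNReal NNReal

lemma ratio_le_clm {Y X : Type*} [NormedAddCommGroup Y] [NormedSpace ℝ Y]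
    [NormedAddCommGroup X] [NormedSpace ℝ X]
    (M : Y → Set X) (hgconv : Convex ℝ {q : Y × X | q.2 ∈ M q.1})
    (ybar : Y) {y : Y} {x : X} (hx : x ∈ M y)
    {xbar : X} (hxbar : xbar ∈ M ybar) (hbest : ‖x - xbar‖ = infDist x (M ybar)) :
    infEdist x (M ybar) / edist y ybar ≤ clm M ybar xbar := by
  set e := infEdist x (M ybar) with he_def
  set d := edist y ybar with hd_def
  have hetop : e ≠ ⊤ := infEdist_ne_top ⟨xbar, hxbar⟩
  have hee : edist x xbar = e := by
    rw [edist_dist, dist_eq_norm, hbest, Metric.infDist]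
    exact ENNReal.ofReal_toReal hetop
  set φ : ℝ → Y × X := fun t => (ybar + t • (y - ybar), xbar + t • (x - xbar)) with hφ
  set F := 𝓝 (ybar, xbar) ⊓ 𝓟 {q : Y × X | q.2 ∈ M q.1} with hF
  have hmemφ : ∀ t ∈ Ioc (0:ℝ) 1, φ t ∈ {q : Y × X | q.2 ∈ M q.1} := by
    intro t ht
    have h := hgconv (show ((ybar, xbar) : Y × X) ∈ _ from hxbar)
      (show ((y, x) : Y × X) ∈ _ from hx)
      (by linarith [ht.2] : (0:ℝ) ≤ 1 - t) ht.1.le (by ring)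
    have heq : φ t = (1 - t) • ((ybar, xbar) : Y × X) + t • ((y, x) : Y × X) := by
      simp only [φ, Prod.smul_mk, Prod.mk_add_mk, Prod.mk.injEq]
      constructor <;> module
    rwa [heq]
  have hnum : ∀ t ∈ Ioc (0:ℝ) 1,
      ENNReal.ofReal t * e ≤ infEdist (xbar + t • (x - xbar)) (M ybar) := by
    intro t ht
    show ENNReal.ofReal t * e ≤ infEDist (xbar + t • (x - xbar)) (M ybar)
    rw [le_infEDist]
    intro u hu
    have hxt : edist x (xbar + t • (x - xbar)) = ENNReal.ofReal (1 - t) * e := by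
      rw [edist_eq_enorm_sub]
      have hxx : x - (xbar + t • (x - xbar)) = (1 - t) • (x - xbar) := by module
      rw [hxx, enorm_smul, Real.enorm_eq_ofReal (by linarith [ht.2]),
        ← hee, edist_eq_enorm_sub]
    have h1 : e ≤ edist x u := infEdist_le_edist_of_mem hu
    have h2 : edist x u ≤ ENNReal.ofReal (1 - t) * e + edist (xbar + t • (x - xbar)) u := by
      calc edist x u ≤ edist x (xbar + t • (x - xbar)) + edist (xbar + t • (x - xbar)) u :=
            edist_triangle _ _ _
        _ = _ := by rw [hxt]
    have hsum : ENNReal.ofReal (1 - t) * e + ENNReal.ofReal t * e = e := by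
      rw [← add_mul, ← ENNReal.ofReal_add (by linarith [ht.2]) ht.1.le]
      norm_num
    have hfin : ENNReal.ofReal (1 - t) * e ≠ ⊤ :=
      ENNReal.mul_ne_top ENNReal.ofReal_ne_top hetop
    have hkey : ENNReal.ofReal (1 - t) * e + ENNReal.ofReal t * e ≤
        ENNReal.ofReal (1 - t) * e + edist (xbar + t • (x - xbar)) u := by
      rw [hsum]; exact h1.trans h2
    exact (ENNReal.add_le_add_iff_left hfin).mp hkey
  have hden : ∀ t ∈ Ioc (0:ℝ) 1,
      edist (ybar + t • (y - ybar)) ybar = ENNReal.ofReal t * d := by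
    intro t ht
    rw [hd_def, edist_eq_enorm_sub, edist_eq_enorm_sub]
    have hyy : ybar + t • (y - ybar) - ybar = t • (y - ybar) := by module
    rw [hyy, enorm_smul, Real.enorm_eq_ofReal ht.1.le]
  have hratio : ∀ t ∈ Ioc (0:ℝ) 1,
      e / d ≤ infEdist (φ t).2 (M ybar) / edist (φ t).1 ybar := by
    intro t ht
    have hT0 : ENNReal.ofReal t ≠ 0 := ne_of_gt (ENNReal.ofReal_pos.mpr ht.1)
    calc e / d = (ENNReal.ofReal t * e) / (ENNReal.ofReal t * d) :=
          (ENNReal.mul_div_mul_left _ _ hT0 ENNReal.ofReal_ne_top).symm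
      _ ≤ infEdist (φ t).2 (M ybar) / (ENNReal.ofReal t * d) :=
          ENNReal.div_le_div_right (hnum t ht) _
      _ = _ := by rw [← hden t ht]
  have hIoc : Ioc (0:ℝ) 1 ∈ 𝓝[>] (0:ℝ) :=
    Ioc_mem_nhdsGT_of_mem ⟨le_refl _, one_pos⟩
  have hcont : Tendsto φ (𝓝 (0:ℝ)) (𝓝 (ybar, xbar)) := by
    have hc : Continuous φ := by fun_prop
    have h0 : φ 0 = (ybar, xbar) := by simp [φ]
    simpa [h0] using hc.tendsto 0
  have htend : Tendsto φ (𝓝[>] (0:ℝ)) F := by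
    rw [hF]
    refine tendsto_inf.mpr ⟨hcont.mono_left nhdsWithin_le_nhds, tendsto_principal.mpr ?_⟩
    filter_upwards [hIoc] with t ht using hmemφ t ht
  have hfreq : ∃ᶠ q in F, e / d ≤ infEdist q.2 (M ybar) / edist q.1 ybar := by
    refine htend.frequently (Filter.Eventually.frequently ?_)
    filter_upwards [hIoc] with t ht using hratio t ht
  exact le_limsup_of_frequently_le hfreq

/-- Theorem `The_calmness_Hoffman_convex`. Let `M : Y ⇉ X` be a
multifunction, `Y` a real normed space and `X` a real Banach space, with nonempty convex
graph. Let `ȳ ∈ dom M` with `M(ȳ)` closed, and assume every point of `X` admits a best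
approximation in `M(ȳ)` (as holds when `X` is reflexive). Then
`sup_{x ∈ M(ȳ)} clm M(ȳ,x) = uclm M(ȳ) = Lipusc M(ȳ) = Hof M(ȳ)`. -/
theorem sup_clm_eq_uclm_eq_lipusc_eq_hof
    {Y X : Type*} [NormedAddCommGroup Y] [NormedSpace ℝ Y]
    [NormedAddCommGroup X] [NormedSpace ℝ X] [CompleteSpace X]
    (M : Y → Set X)
    (hgne : {q : Y × X | q.2 ∈ M q.1}.Nonempty)
    (hgconv : Convex ℝ {q : Y × X | q.2 ∈ M q.1})
    (ybar : Y) (hdom : (M ybar).Nonempty) (hcl : IsClosed (M ybar))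
    (hproj : ∀ x : X, ∃ xbar ∈ M ybar, ‖x - xbar‖ = infDist x (M ybar)) :
    (⨆ x ∈ M ybar, clm M ybar x) = uclm M ybar ∧
    uclm M ybar = lipusc M ybar ∧
    lipusc M ybar = hofMod M ybar := by
  -- ① sup clm ≤ uclm
  have h1 : (⨆ x ∈ M ybar, clm M ybar x) ≤ uclm M ybar := by
    refine iSup₂_le fun xbar hxbar => le_iInf₂ fun κ hκ => ?_
    obtain ⟨V, hV, ε, hε, hprop⟩ := hκ
    have hev : ∀ᶠ q : Y × X in 𝓝 (ybar, xbar),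
        q.1 ∈ V ∧ edist q.2 xbar < ENNReal.ofReal ε := by
      have hb : EMetric.ball xbar (ENNReal.ofReal ε) ∈ 𝓝 xbar :=
        EMetric.ball_mem_nhds _ (ENNReal.ofReal_pos.mpr hε)
      filter_upwards [prod_mem_nhds hV hb] with q hq
      exact ⟨hq.1, hq.2⟩
    refine Filter.limsup_le_of_le (by isBoundedDefault) ?_
    rw [Filter.eventually_inf_principal]
    filter_upwards [hev] with q hq hqg
    have hle : infEdist q.2 (M ybar) ≤ ENNReal.ofReal ε :=
      le_trans (infEdist_le_edist_of_mem hxbar) hq.2.le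
    exact ENNReal.div_le_of_le_mul (hprop q.1 hq.1 q.2 hqg hle)
  -- ② uclm ≤ lipusc
  have h2 : uclm M ybar ≤ lipusc M ybar := by
    refine le_iInf₂ fun κ hκ => ?_
    obtain ⟨V, hV, hprop⟩ := hκ
    exact iInf₂_le κ ⟨V, hV, 1, one_pos, fun y hy x hx _ => hprop y hy x hx⟩
  -- ③ lipusc ≤ hofMod
  have h3 : lipusc M ybar ≤ hofMod M ybar := by
    by_cases htop : hofMod M ybar = ⊤
    · rw [htop]; exact le_top
    · set κ := (hofMod M ybar).toNNReal with hκdef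
      have hκ : (κ : ℝ≥0∞) = hofMod M ybar := ENNReal.coe_toNNReal htop
      have hprop : ∃ V ∈ 𝓝 ybar, ∀ y ∈ V, ∀ x ∈ M y,
          infEdist x (M ybar) ≤ (κ : ℝ≥0∞) * edist y ybar := by
        refine ⟨univ, univ_mem, fun y _ x hx => ?_⟩
        have hr : infEdist x (M ybar) / edist y ybar ≤ (κ : ℝ≥0∞) := by
          rw [hκ]
          exact le_iSup_of_le y (le_iSup_of_le x (le_iSup_of_le hx le_rfl))
        exact (ENNReal.div_le_iff_le_mul (Or.inr ENNReal.coe_ne_top)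
          (Or.inl (edist_ne_top _ _))).mp hr
      calc lipusc M ybar ≤ (κ : ℝ≥0∞) := iInf₂_le κ hprop
        _ = hofMod M ybar := hκ
  -- ④ hofMod ≤ sup clm
  have h4 : hofMod M ybar ≤ ⨆ x ∈ M ybar, clm M ybar x := by
    refine iSup_le fun y => iSup_le fun x => iSup_le fun hx => ?_
    obtain ⟨xbar, hxbar, hbest⟩ := hproj x
    exact le_trans (ratio_le_clm M hgconv ybar hx hxbar hbest)
      (le_iSup₂_of_le xbar hxbar le_rfl)
  have e1 : (⨆ x ∈ M ybar, clm M ybar x) = uclm M ybar :=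
    le_antisymm h1 (le_trans h2 (le_trans h3 h4))
  have e2 : uclm M ybar = lipusc M ybar :=
    le_antisymm h2 (le_trans h3 (le_trans h4 h1))
  have e3 : lipusc M ybar = hofMod M ybar :=
    le_antisymm h3 (le_trans h4 (le_trans h1 h2))
  exact ⟨e1, e2, e3⟩
end

section
/- Let C be a nonempty closed convex subset of ℝⁿ which is not a singleton, whose set of extreme points extr C is nonempty, and let x⁰ ∈ C \ extr C. Then there exist y⁰ ∈ extr C, z⁰ ∈ C, and μ ∈ (0,1) such that x⁰ = (1−μ)y⁰ + μz⁰. -/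
open Set Module Pointwise

variable {n : ℕ}

/-- Face lemma: if `p ∈ C` cannot be moved inside `C` in direction `e ∈ vectorSpan C`,
then `p` lies in a proper (lower-dimensional) extreme face of `C`. -/
lemma face_lemma {C : Set (Fin n → ℝ)} (hcl : IsClosed C) (hconv : Convex ℝ C)
    {p e : Fin n → ℝ} (hp : p ∈ C) (he : e ∈ vectorSpan ℝ C)
    (hext : ∀ ε : ℝ, 0 < ε → p + ε • e ∉ C) :
    ∃ F : Set (Fin n → ℝ), IsExtreme ℝ C F ∧ IsClosed F ∧ Convex ℝ F ∧ p ∈ F ∧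
      finrank ℝ (vectorSpan ℝ F) < finrank ℝ (vectorSpan ℝ C) := by
  classical
  set U : Submodule ℝ (Fin n → ℝ) := vectorSpan ℝ C with hU
  obtain ⟨W, hW⟩ := Submodule.exists_isCompl U
  set C' : Set (Fin n → ℝ) := C + (W : Set (Fin n → ℝ)) with hC'
  have hC'conv : Convex ℝ C' := hconv.add (W.convex)
  have hCsub : C ⊆ C' := fun x hx => ⟨x, hx, 0, W.zero_mem, add_zero x⟩
  -- points `p + ε e` are not even in `C'`
  have hext' : ∀ ε : ℝ, 0 < ε → p + ε • e ∉ C' := by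
    rintro ε hε ⟨x, hx, w, hw, hxw⟩
    have hwU : w ∈ U := by
      have h1 : w = (p - x) + ε • e := by
        have : x + w = p + ε • e := hxw
        linear_combination (norm := module) this
      rw [h1]
      exact U.add_mem (vsub_mem_vectorSpan ℝ hp hx) (U.smul_mem ε he)
    have hw0 : w = 0 := (Submodule.disjoint_def.1 hW.disjoint) w hwU hw
    have hxp : x = p + ε • e := by
      have h2 : x + w = p + ε • e := hxw
      rw [hw0, add_zero] at h2; exact h2
    exact hext ε hε (hxp ▸ hx)
  -- `C'` has full affine span hence nonempty interior
  have hspan : affineSpan ℝ C' = ⊤ := by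
    have hne : C'.Nonempty := ⟨p, hCsub hp⟩
    rw [AffineSubspace.affineSpan_eq_top_iff_vectorSpan_eq_top_of_nonempty ℝ _ _ hne]
    rw [eq_top_iff, ← hW.sup_eq_top]
    refine sup_le ?_ ?_
    · exact (vectorSpan_mono ℝ hCsub : U ≤ _)
    · intro w hw
      have h1 : p + w ∈ C' := ⟨p, hp, w, hw, rfl⟩
      have h2 : p ∈ C' := hCsub hp
      have := vsub_mem_vectorSpan ℝ h1 h2
      simpa using this
  have hint : (interior C').Nonempty := by
    rw [hC'conv.interior_nonempty_iff_affineSpan_eq_top]; exact hspan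
  -- supporting functional at `p`
  have hpni : p ∉ interior C' := by
    intro hpint
    have hcont : Continuous fun t : ℝ => p + t • e := by continuity
    have : ∀ᶠ t : ℝ in nhds 0, p + t • e ∈ interior C' := by
      have := hcont.tendsto 0
      simp only [zero_smul, add_zero] at this
      exact this.eventually (isOpen_interior.eventually_mem hpint)
    obtain ⟨δ, hδ, hδ'⟩ := Metric.eventually_nhds_iff.1 this
    have h2 : p + (δ/2) • e ∈ interior C' := by
      apply hδ'
      rw [Real.dist_eq, sub_zero, abs_of_pos (half_pos hδ)]
      linarith
    exact hext' (δ/2) (half_pos hδ) (interior_subset h2)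
  obtain ⟨f, hf⟩ := geometric_hahn_banach_open_point hC'conv.interior isOpen_interior hpni
  -- f ≤ f p on all of C'
  have hle : ∀ x ∈ C', f x ≤ f p := by
    obtain ⟨a0, ha0⟩ := hint
    intro x hx
    have hseg : ∀ t : ℝ, t ∈ Ioc (0:ℝ) 1 → f x + t * (f a0 - f x) < f p := by
      intro t ht
      have := hf _ (hC'conv.add_smul_sub_mem_interior hx ha0 ht)
      simpa [mul_sub] using this
    have htend : Filter.Tendsto (fun t : ℝ => f x + t * (f a0 - f x)) (nhdsWithin 0 (Ioi 0))
        (nhds (f x)) := by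
      have : Filter.Tendsto (fun t : ℝ => f x + t * (f a0 - f x)) (nhds 0) (nhds (f x)) := by
        have hc : Continuous fun t : ℝ => f x + t * (f a0 - f x) := by continuity
        simpa using hc.tendsto 0
      exact this.mono_left nhdsWithin_le_nhds
    refine le_of_tendsto htend ?_
    filter_upwards [Ioc_mem_nhdsGT_of_mem (by norm_num : (0:ℝ) ∈ Ico (0:ℝ) 1)] with t ht
    exact (hseg t ht).le
  have hleC : ∀ x ∈ C, f x ≤ f p := fun x hx => hle x (hCsub hx)
  -- strict somewhere on C
  have hstrict : ∃ c ∈ C, f c < f p := by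
    obtain ⟨a0, ha0⟩ := hint
    obtain ⟨c, hc, w, hw, rfl⟩ := interior_subset ha0
    have hfw : f w = 0 := by
      have h1 : ∀ t : ℝ, f c + t * f w ≤ f p := by
        intro t
        have : c + t • w ∈ C' := ⟨c, hc, t • w, W.smul_mem t hw, rfl⟩
        simpa using hle _ this
      by_contra hfw
      rcases lt_or_gt_of_ne hfw with h | h
      · have := h1 ((f p - f c + 1) / f w)
        rw [div_mul_cancel₀ _ (ne_of_lt h)] at this; linarith
      · have := h1 ((f p - f c + 1) / f w)
        rw [div_mul_cancel₀ _ (ne_of_gt h)] at this; linarith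
    refine ⟨c, hc, ?_⟩
    have := hf _ ha0
    simp only [map_add] at this
    linarith [this, hfw]
  obtain ⟨c, hcC, hfc⟩ := hstrict
  -- the face
  refine ⟨{x ∈ C | f x = f p}, ?_, ?_, ?_, ⟨hp, rfl⟩, ?_⟩
  · refine IsExposed.isExtreme (fun _ => ⟨f, ?_⟩)
    ext x
    constructor
    · rintro ⟨hx, hfx⟩
      exact ⟨hx, fun y hy => hfx ▸ hleC y hy⟩
    · rintro ⟨hx, hfx⟩
      exact ⟨hx, le_antisymm (hleC x hx) (hfx p hp)⟩
  · exact hcl.inter (isClosed_eq f.continuous continuous_const)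
  · intro x hx y hy a b ha hb hab
    refine ⟨hconv hx.1 hy.1 ha hb hab, ?_⟩
    simp only [map_add, map_smul, hx.2, hy.2, smul_eq_mul]
    rw [← add_mul, hab, one_mul]
  · have hsub : vectorSpan ℝ {x ∈ C | f x = f p} ≤ LinearMap.ker (f : (Fin n → ℝ) →ₗ[ℝ] ℝ) := by
      rw [vectorSpan_def, Submodule.span_le]
      rintro z ⟨x, hx, y, hy, rfl⟩
      simp only [SetLike.mem_coe, LinearMap.mem_ker, vsub_eq_sub, map_sub,
        ContinuousLinearMap.coe_coe]
      rw [hx.2, hy.2, sub_self]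
    refine Submodule.finrank_lt_finrank_of_lt (lt_of_le_of_ne
      (vectorSpan_mono ℝ (sep_subset _ _)) ?_)
    intro hEq
    have hv : p - c ∈ U := vsub_mem_vectorSpan ℝ hp hcC
    rw [← hEq] at hv
    have := hsub hv
    simp only [LinearMap.mem_ker, map_sub, ContinuousLinearMap.coe_coe] at this
    linarith

/-- A closed convex set with an extreme point contains no full line. -/
lemma lineFree_of_extreme {C : Set (Fin n → ℝ)} (hcl : IsClosed C) (hconv : Convex ℝ C)
    (hextr : (Set.extremePoints ℝ C).Nonempty) :
    ∀ x d : Fin n → ℝ, d ≠ 0 → ∃ t : ℝ, x + t • d ∉ C := by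
  intro x d hd
  by_contra h
  push_neg at h
  obtain ⟨y, hy⟩ := hextr
  have hyC : y ∈ C := hy.1
  have key : ∀ d' : Fin n → ℝ, (∀ t : ℝ, x + t • d' ∈ C) → y + d' ∈ C := by
    intro d' hline
    have hmem : ∀ j : ℕ, y + d' + (1 / ((j : ℝ) + 1)) • (x - y) ∈ C := by
      intro j
      have hθ : (0:ℝ) < 1 / ((j : ℝ) + 1) := by positivity
      have hθ1 : 1 / ((j : ℝ) + 1) ≤ 1 := by
        rw [div_le_one (by positivity)]; linarith [Nat.cast_nonneg (α := ℝ) j]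
      have := hconv hyC (hline ((j : ℝ) + 1)) (by linarith : (0:ℝ) ≤ 1 - 1/((j:ℝ)+1))
        hθ.le (by ring)
      have heq : (1 - 1/((j:ℝ)+1)) • y + (1/((j:ℝ)+1)) • (x + ((j:ℝ)+1) • d')
          = y + d' + (1 / ((j : ℝ) + 1)) • (x - y) := by
        have hne : ((j:ℝ)+1) ≠ 0 := by positivity
        match_scalars
        · field_simp; ring
        · field_simp
        · field_simp
      rwa [heq] at this
    have htend : Filter.Tendsto (fun j : ℕ => y + d' + (1 / ((j : ℝ) + 1)) • (x - y))
        Filter.atTop (nhds (y + d')) := by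
      have h0 : Filter.Tendsto (fun j : ℕ => 1 / ((j : ℝ) + 1)) Filter.atTop (nhds 0) :=
        tendsto_one_div_add_atTop_nhds_zero_nat
      have := Filter.Tendsto.smul h0 (tendsto_const_nhds (x := x - y) (f := Filter.atTop (α := ℕ)))
      have h2 := (tendsto_const_nhds (x := y + d') (f := Filter.atTop (α := ℕ))).add this
      simpa using h2
    exact hcl.mem_of_tendsto htend (Filter.Eventually.of_forall hmem)
  have h1 : y + d ∈ C := key d h
  have h2 : y + (-d) ∈ C := key (-d) (by intro t; simpa [neg_smul, smul_neg] using h (-t))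
  have hseg : y ∈ openSegment ℝ (y + (-d)) (y + d) := by
    refine ⟨1/2, 1/2, by norm_num, by norm_num, by norm_num, ?_⟩
    module
  have hcomp := hy.2 h2 h1 hseg
  have hnd : -d = 0 := by
    have h3 : y + -d = y := hcomp
    linear_combination (norm := module) h3
  exact hd (neg_eq_zero.1 hnd)

/-- The supremum of the closed chord `{t | x0 + t e ∈ C}`. -/
lemma aux_sup {C : Set (Fin n → ℝ)} (hcl : IsClosed C) {x0 e : Fin n → ℝ} {s0 : ℝ}
    (h0 : x0 + s0 • e ∈ C) (hbdd : BddAbove {t : ℝ | x0 + t • e ∈ C}) :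
    ∃ M : ℝ, s0 ≤ M ∧ x0 + M • e ∈ C ∧ ∀ t : ℝ, x0 + t • e ∈ C → t ≤ M := by
  have hTcl : IsClosed {t : ℝ | x0 + t • e ∈ C} :=
    IsClosed.preimage (by continuity) hcl
  have hMem : sSup {t : ℝ | x0 + t • e ∈ C} ∈ {t : ℝ | x0 + t • e ∈ C} :=
    hTcl.csSup_mem ⟨s0, h0⟩ hbdd
  exact ⟨_, le_csSup hbdd h0, hMem, fun t ht => le_csSup hbdd ht⟩

/-- Main induction: in a line-free closed convex set, every non-extreme point is strictly
between an extreme point and another point of the set. -/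
lemma main_decomp : ∀ (k : ℕ) (C : Set (Fin n → ℝ)), IsClosed C → Convex ℝ C →
    (∀ x d : Fin n → ℝ, d ≠ 0 → ∃ t : ℝ, x + t • d ∉ C) →
    finrank ℝ (vectorSpan ℝ C) ≤ k →
    ∀ x0 ∈ C, x0 ∉ Set.extremePoints ℝ C →
    ∃ y ∈ Set.extremePoints ℝ C, ∃ z ∈ C, ∃ μ ∈ Ioo (0:ℝ) 1, x0 = (1-μ) • y + μ • z := by
  intro k
  induction k using Nat.strong_induction_on with
  | _ k IH =>
  intro C hcl hconv hlf hdim x0 hx0C hx0ne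
  rw [mem_extremePoints] at hx0ne
  push_neg at hx0ne
  obtain ⟨a, haC, b, hbC, hseg, hne⟩ := hx0ne hx0C
  obtain ⟨ta, tb, hta, htb, htab, hx0eq⟩ := hseg
  have hab : a ≠ b := by
    rintro rfl
    have hax : a = x0 := by
      rw [← hx0eq, ← add_smul, htab, one_smul]
    exact hne hax hax
  set d := b - a with hd_def
  have hd0 : d ≠ 0 := sub_ne_zero.2 (Ne.symm hab)
  have hdspan : d ∈ vectorSpan ℝ C := by
    simpa [hd_def] using vsub_mem_vectorSpan ℝ hbC haC
  have hmem_a : x0 + (-tb) • d ∈ C := by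
    have h : x0 + (-tb) • d = a := by
      rw [← hx0eq, hd_def]; match_scalars <;> linarith
    rw [h]; exact haC
  have hmem_b : x0 + ta • d ∈ C := by
    have h : x0 + ta • d = b := by
      rw [← hx0eq, hd_def]; match_scalars <;> linarith
    rw [h]; exact hbC
  have key : ∀ e : Fin n → ℝ, e ∈ vectorSpan ℝ C → ∀ sq s0 : ℝ, sq < 0 → 0 < s0 →
      x0 + sq • e ∈ C → x0 + s0 • e ∈ C → BddAbove {t : ℝ | x0 + t • e ∈ C} →
      ∃ y ∈ Set.extremePoints ℝ C, ∃ z ∈ C, ∃ μ ∈ Ioo (0:ℝ) 1, x0 = (1-μ) • y + μ • z := by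
    intro e hespan sq s0 hsq hs0 hqC h0C hbdd
    obtain ⟨M, hs0M, hMC, hMmax⟩ := aux_sup hcl h0C hbdd
    have hM : 0 < M := lt_of_lt_of_le hs0 hs0M
    have hnotext : ∀ ε : ℝ, 0 < ε → (x0 + M • e) + ε • e ∉ C := by
      intro ε hε hmem
      have h1 : x0 + (M + ε) • e ∈ C := by
        rw [add_smul, ← add_assoc]; exact hmem
      linarith [hMmax _ h1]
    have hMsq : 0 < M - sq := by linarith
    have hMsqne : M - sq ≠ 0 := ne_of_gt hMsq
    set lam := (-sq) / (M - sq) with hlam_def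
    have hlam0 : 0 < lam := div_pos (by linarith) hMsq
    have hlam1 : lam < 1 := (div_lt_one hMsq).2 (by linarith)
    have hx0comb : x0 = lam • (x0 + M • e) + (1 - lam) • (x0 + sq • e) := by
      rw [hlam_def]; match_scalars
      · field_simp <;> ring
      · field_simp <;> ring
    by_cases hpext : (x0 + M • e) ∈ Set.extremePoints ℝ C
    · refine ⟨x0 + M • e, hpext, x0 + sq • e, hqC, 1 - lam, ⟨by linarith, by linarith⟩, ?_⟩
      rw [show (1:ℝ) - (1 - lam) = lam by ring]
      exact hx0comb
    · obtain ⟨F, hFext, hFcl, hFconv, hpF, hFdim⟩ := face_lemma hcl hconv hMC hespan hnotext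
      have hFsub : F ⊆ C := hFext.1
      have hlfF : ∀ x d' : Fin n → ℝ, d' ≠ 0 → ∃ t : ℝ, x + t • d' ∉ F := fun x d' hd' =>
        (hlf x d' hd').imp fun t ht hmem => ht (hFsub hmem)
      have hpFne : (x0 + M • e) ∉ Set.extremePoints ℝ F := fun hmem =>
        hpext (hFext.extremePoints_subset_extremePoints hmem)
      obtain ⟨y, hyF, z, hzF, ν, hν, hpdec⟩ :=
        IH _ (lt_of_lt_of_le hFdim hdim) F hFcl hFconv hlfF le_rfl _ hpF hpFne
      refine ⟨y, hFext.extremePoints_subset_extremePoints hyF, ?_⟩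
      obtain ⟨hν0, hν1⟩ := hν
      have hμ0 : 0 < 1 - lam * (1 - ν) := by nlinarith
      have hμ1 : 1 - lam * (1 - ν) < 1 := by nlinarith
      have hμne : 1 - lam * (1 - ν) ≠ 0 := ne_of_gt hμ0
      refine ⟨((lam * ν) / (1 - lam * (1 - ν))) • z +
        ((1 - lam) / (1 - lam * (1 - ν))) • (x0 + sq • e), ?_,
        1 - lam * (1 - ν), ⟨hμ0, hμ1⟩, ?_⟩
      · refine hconv (hFsub hzF) hqC ?_ ?_ ?_
        · exact div_nonneg (mul_nonneg hlam0.le hν0.le) hμ0.le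
        · exact div_nonneg (by linarith) hμ0.le
        · field_simp <;> ring
      · calc x0 = lam • (x0 + M • e) + (1 - lam) • (x0 + sq • e) := hx0comb
          _ = lam • ((1 - ν) • y + ν • z) + (1 - lam) • (x0 + sq • e) := by rw [← hpdec]
          _ = _ := by
            match_scalars <;> field_simp <;> ring
  have hor : BddAbove {t : ℝ | x0 + t • d ∈ C} ∨ BddBelow {t : ℝ | x0 + t • d ∈ C} := by
    by_contra hcon
    push_neg at hcon
    obtain ⟨t', ht'⟩ := hlf x0 d hd0
    have hTconv : Convex ℝ {t : ℝ | x0 + t • d ∈ C} := by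
      intro t1 h1 t2 h2 α β hα hβ hαβ
      have hmem := hconv h1 h2 hα hβ hαβ
      have heq : α • (x0 + t1 • d) + β • (x0 + t2 • d) = x0 + (α • t1 + β • t2) • d := by
        simp only [smul_eq_mul]
        match_scalars <;> linarith
      rw [heq] at hmem
      exact hmem
    obtain ⟨t2, ht2, hlt2⟩ := not_bddAbove_iff.1 hcon.1 t'
    obtain ⟨t1, ht1, hlt1⟩ := not_bddBelow_iff.1 hcon.2 t'
    exact ht' (hTconv.ordConnected.out ht1 ht2 ⟨hlt1.le, hlt2.le⟩)
  rcases hor with hba | hbb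
  · exact key d hdspan (-tb) ta (by linarith) hta hmem_a hmem_b hba
  · have hnegspan : -d ∈ vectorSpan ℝ C := Submodule.neg_mem _ hdspan
    have hma : x0 + tb • (-d) ∈ C := by
      rw [smul_neg, ← neg_smul]; exact hmem_a
    have hmb : x0 + (-ta) • (-d) ∈ C := by
      rw [neg_smul, smul_neg, neg_neg]; exact hmem_b
    have hbdd' : BddAbove {t : ℝ | x0 + t • (-d) ∈ C} := by
      obtain ⟨l, hl⟩ := hbb
      refine ⟨-l, fun s hs => ?_⟩
      have hmem : x0 + (-s) • d ∈ C := by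
        rw [neg_smul, ← smul_neg]; exact hs
      have := hl hmem
      linarith
    exact key (-d) hnegspan (-ta) tb (by linarith) htb hmb hma hbdd'


open Set

/-- Proposition `Prop3`. Let `C ⊆ ℝⁿ` be a nonempty closed convex set,
different from a singleton, whose set of extreme points is nonempty, and let
`x⁰ ∈ C \ extr C`. Then there exist `y⁰ ∈ extr C`, `z⁰ ∈ C` and `μ ∈ (0,1)` with
`x⁰ = (1−μ)·y⁰ + μ·z⁰`. -/
theorem exists_extreme_decomposition
    {n : ℕ} (C : Set (Fin n → ℝ))
    (hne : C.Nonempty) (hcl : IsClosed C) (hconv : Convex ℝ C)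
    (hnotsingle : ¬ ∃ x : Fin n → ℝ, C = {x})
    (hextr : (Set.extremePoints ℝ C).Nonempty)
    (x0 : Fin n → ℝ) (hx0 : x0 ∈ C \ Set.extremePoints ℝ C) :
    ∃ y0 ∈ Set.extremePoints ℝ C, ∃ z0 ∈ C, ∃ μ ∈ Set.Ioo (0 : ℝ) 1,
      x0 = (1 - μ) • y0 + μ • z0 := by
  have hlf := lineFree_of_extreme hcl hconv hextr
  exact main_decomp (Module.finrank ℝ (vectorSpan ℝ C)) C hcl hconv hlf le_rfl x0 hx0.1 hx0.2
end

section
/- Assume T is finite. Let b̄ ∈ dom F and let x¹, x² ∈ bd F(b̄) satisfy T(x¹) ⊆ T(x²), where T(x) := {t ∈ T : a_t'x = b̄_t}. Then D(x¹) ⊆ D(x²), where for x ∈ F(b̄), D(x) denotes the family of subsets D ⊆ T(x) such that the system { a_t'd = 1 for t ∈ D, a_t'd < 1 for t ∈ T(x) \ D } has a solution d ∈ ℝⁿ. -/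
open Filter Set
open scoped Topology

/-- The set of active indices `T(x) = {t ∈ T : a_t'x = b̄_t}` at a point `x`. -/
def activeIdx {n m : ℕ} (a : Fin m → (Fin n → ℝ)) (bbar : Fin m → ℝ)
    (x : Fin n → ℝ) : Set (Fin m) :=
  {t : Fin m | (∑ i, a t i * x i) = bbar t}

/-- The family `D(x)` of subsets `D ⊆ T(x)` such that the system
`{a_t'd = 1 (t ∈ D), a_t'd < 1 (t ∈ T(x) \ D)}` is consistent in `d ∈ ℝⁿ`. -/
def Dfam {n m : ℕ} (a : Fin m → (Fin n → ℝ)) (bbar : Fin m → ℝ)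
    (x : Fin n → ℝ) : Set (Set (Fin m)) :=
  {D | D ⊆ activeIdx a bbar x ∧ ∃ d : Fin n → ℝ,
      (∀ t ∈ D, (∑ i, a t i * d i) = 1) ∧
      (∀ t ∈ activeIdx a bbar x \ D, (∑ i, a t i * d i) < 1)}

lemma isClosed_feas {n m : ℕ} (a : Fin m → (Fin n → ℝ)) (b : Fin m → ℝ) :
    IsClosed (feas a b) := by
  have : feas a b = ⋂ t : Fin m, {x : Fin n → ℝ | (∑ i, a t i * x i) ≤ b t} := by
    ext x; simp [feas]
  rw [this]
  refine isClosed_iInter fun t => isClosed_le ?_ continuous_const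
  exact continuous_finset_sum _ fun i _ => (continuous_const.mul (continuous_apply i))

/-- Proposition `prop4`. For a finite system, let `b̄ ∈ dom F` and
`x¹, x² ∈ bd F(b̄)` with `T(x¹) ⊆ T(x²)`. Then `D(x¹) ⊆ D(x²)`. -/
theorem Dfam_mono_finite
    {n m : ℕ} (a : Fin m → (Fin n → ℝ)) (bbar : Fin m → ℝ)
    (hdom : (feas a bbar).Nonempty)
    (x1 x2 : Fin n → ℝ)
    (hx1 : x1 ∈ frontier (feas a bbar)) (hx2 : x2 ∈ frontier (feas a bbar))
    (hsub : activeIdx a bbar x1 ⊆ activeIdx a bbar x2) :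
    Dfam a bbar x1 ⊆ Dfam a bbar x2 := by
  have hx1f : x1 ∈ feas a bbar :=
    (isClosed_feas a bbar).closure_subset (frontier_subset_closure hx1)
  rintro D ⟨hD, d, hDeq, hDlt⟩
  refine ⟨hD.trans hsub, ?_⟩
  -- bound for λ
  obtain ⟨M, hM⟩ := (Finset.univ.image fun t : Fin m =>
      (1 - (∑ i, a t i * d i)) / ((∑ i, a t i * x1 i) - bbar t)).exists_le
  set lam : ℝ := M + 1 with hlam
  refine ⟨fun i => d i + lam * (x1 i - x2 i), ?_, ?_⟩
  · intro t ht
    have ht1 : (∑ i, a t i * x1 i) = bbar t := hD ht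
    have ht2 : (∑ i, a t i * x2 i) = bbar t := hsub (hD ht)
    have := hDeq t ht
    have hexp : (∑ i, a t i * (d i + lam * (x1 i - x2 i)))
        = (∑ i, a t i * d i) + lam * ((∑ i, a t i * x1 i) - (∑ i, a t i * x2 i)) := by
      rw [← Finset.sum_sub_distrib, Finset.mul_sum, ← Finset.sum_add_distrib]
      exact Finset.sum_congr rfl fun i _ => by ring
    rw [hexp, ht1, ht2]
    linarith
  · intro t ⟨ht2, htD⟩
    have ht2' : (∑ i, a t i * x2 i) = bbar t := ht2
    have hexp : (∑ i, a t i * (d i + lam * (x1 i - x2 i)))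
        = (∑ i, a t i * d i) + lam * ((∑ i, a t i * x1 i) - (∑ i, a t i * x2 i)) := by
      rw [← Finset.sum_sub_distrib, Finset.mul_sum, ← Finset.sum_add_distrib]
      exact Finset.sum_congr rfl fun i _ => by ring
    rw [hexp, ht2']
    by_cases ht1 : t ∈ activeIdx a bbar x1
    · have := hDlt t ⟨ht1, htD⟩
      have ht1' : (∑ i, a t i * x1 i) = bbar t := ht1
      rw [ht1']
      linarith
    · have hlt : (∑ i, a t i * x1 i) < bbar t :=
        lt_of_le_of_ne (hx1f t) ht1
      have hc : (∑ i, a t i * x1 i) - bbar t < 0 := by linarith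
      have hMt : (1 - (∑ i, a t i * d i)) / ((∑ i, a t i * x1 i) - bbar t) ≤ M :=
        hM _ (Finset.mem_image_of_mem _ (Finset.mem_univ t))
      have hlamgt : (1 - (∑ i, a t i * d i)) / ((∑ i, a t i * x1 i) - bbar t) < lam := by
        rw [hlam]; linarith
      have := (div_lt_iff_of_neg hc).mp hlamgt
      linarith [this]
end
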